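/- arXiv:math/0303043 — 8 statements merged into one kernel-verified Lean document; each statement's English description precedes it below -/
import Mathlib

section
/- Let s and l be positive integers and let p be an odd prime such that p ≥ l+2 and p-1 divides none of ks and ks+1 for k = 1, …, l. Then the multiple harmonic sum H({s}^l; p-1) satisfies: v_p(H({s}^l; p-1)) ≥ 1 if ls is even, and v_p(H({s}^l; p-1)) ≥ 2 if ls is odd. -/
open Classical in
/-- Multiple harmonic sum `H(s₁,…,s_l; n) = ∑_{1 ≤ k₁ < ⋯ < k_l ≤ n} k₁^{-s₁} ⋯ k_l^{-s_l}`,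
encoded via strictly increasing tuples of indices in `{1,…,n}` (an empty sum is `0`,
and `mhs [] n = 1`). -/
noncomputable def mhs (s : List ℕ) (n : ℕ) : ℚ :=
  ∑ k ∈ Finset.univ.filter
      (fun k : Fin s.length → Fin (n + 1) =>
        StrictMono k ∧ ∀ i, 1 ≤ (k i : ℕ)),
    ∏ i, 1 / (((k i : ℕ) : ℚ) ^ s.get i)

open Classical in
/-- `p`-restricted multiple harmonic sum `H*(s; n)`: same sum with all indices
not divisible by `p`. -/
noncomputable def mhsStar (p : ℕ) (s : List ℕ) (n : ℕ) : ℚ :=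
  ∑ k ∈ Finset.univ.filter
      (fun k : Fin s.length → Fin (n + 1) =>
        StrictMono k ∧ ∀ i, 1 ≤ (k i : ℕ) ∧ ¬ p ∣ (k i : ℕ)),
    ∏ i, 1 / (((k i : ℕ) : ℚ) ^ s.get i)

/-!
`H({s}^l; p-1)` is the elementary symmetric function `e_l` of `x_k = k^{-s}`, `1 ≤ k ≤ p-1`,
and the hypothesis `p-1 ∤ is` makes the power sums `P_i = ∑ x_k^i` vanish mod `p` for `i ≤ l`.
Newton's identity `l e_l = ± ∑_{i=1}^{l} ± e_{l-i} P_i`, with `l` invertible mod `p`, gives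
`e_l ≡ 0 mod p`. For `ls` odd, the same identity read mod `p²` has every term with `i < l` a
product of two multiples of `p`, and the last term `P_l = ∑ k^{-ls}` vanishes mod `p²`: pairing
`k` with `p-k` gives `2 P_l ≡ -ls·p·∑ k^{-ls-1}`, and that sum is `0` mod `p` as `p-1 ∤ ls+1`.
-/

open Finset MvPolynomial
open scoped Nat

theorem mhs_eq_sum_powersetCard {L : List ℕ} {s : ℕ} (hL : ∀ i, L.get i = s) (n : ℕ) :
    mhs L n = ∑ T ∈ (Icc 1 n).powersetCard L.length, ∏ k ∈ T, ((k : ℚ)⁻¹) ^ s := by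
  classical
  unfold mhs
  have hval {k : Fin L.length → Fin (n + 1)} (hk : StrictMono k) :
      StrictMono fun i => (k i : ℕ) := fun _ _ h => hk h
  have hcard {k : Fin L.length → Fin (n + 1)} (hk : StrictMono k) :
      (univ.image fun i => (k i : ℕ)).card = L.length := by
    rw [card_image_of_injective _ (hval hk).injective, card_univ, Fintype.card_fin]
  refine sum_bij' (fun k _ => univ.image fun i => (k i : ℕ))
    (fun T hT i => ⟨T.orderEmbOfFin (mem_powersetCard.1 hT).2 i,
      Nat.lt_succ_of_le (mem_Icc.1 ((mem_powersetCard.1 hT).1 (orderEmbOfFin_mem _ _ i))).2⟩)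
    ?_ ?_ ?_ ?_ ?_
  · simp only [mem_filter, mem_univ, true_and, mem_powersetCard]
    rintro k ⟨hk, hk1⟩
    refine ⟨fun x hx => ?_, hcard hk⟩
    obtain ⟨i, -, rfl⟩ := mem_image.1 hx
    exact mem_Icc.2 ⟨hk1 i, Nat.lt_succ_iff.1 (k i).2⟩
  · simp only [mem_filter, mem_univ, true_and, mem_powersetCard]
    rintro T ⟨hT, hTcard⟩
    exact ⟨fun i j hij => (T.orderEmbOfFin hTcard).strictMono hij,
      fun i => (mem_Icc.1 (hT (orderEmbOfFin_mem _ _ i))).1⟩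
  · simp only [mem_filter, mem_univ, true_and]
    rintro k ⟨hk, -⟩
    funext i
    exact Fin.ext (congrFun (orderEmbOfFin_unique (hcard hk)
      (fun j => mem_image_of_mem _ (mem_univ j)) (hval hk)) i).symm
  · intro T hT
    exact image_orderEmbOfFin_univ _ _
  · simp only [mem_filter, mem_univ, true_and]
    rintro k ⟨hk, -⟩
    rw [prod_image fun i _ j _ h => (hval hk).injective h]
    exact prod_congr rfl fun i _ => by rw [hL, one_div, inv_pow]

theorem Finset.mul_sum_powersetCard_prod_eq_sum {ι R : Type*} [CommRing R] (s : Finset ι)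
    (f : ι → R) (j : ℕ) :
    j * ∑ T ∈ s.powersetCard j, ∏ k ∈ T, f k = (-1) ^ (j + 1) *
      ∑ a ∈ antidiagonal j with a.1 < j,
        (-1) ^ a.1 * (∑ T ∈ s.powersetCard a.1, ∏ k ∈ T, f k) * ∑ k ∈ s, f k ^ a.2 := by
  classical
  have hesymm (i : ℕ) :
      aeval (fun k : s => f k) (esymm s R i) = ∑ T ∈ s.powersetCard i, ∏ k ∈ T, f k := by
    rw [aeval_esymm_eq_multiset_esymm, ← esymm_map_val, univ_eq_attach, attach_val]
    exact congrArg (Multiset.esymm · i) (Multiset.attach_map_val' _ f)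
  have hpsum (i : ℕ) : aeval (fun k : s => f k) (psum s R i) = ∑ k ∈ s, f k ^ i := by
    simp only [psum, map_sum, map_pow, aeval_X, univ_eq_attach]
    exact sum_attach s (f · ^ i)
  have := congrArg (aeval fun k : s => f k) (mul_esymm_eq_sum s R j)
  simp only [map_mul, map_pow, map_neg, map_one, map_natCast, map_sum, hesymm, hpsum] at this
  exact this

section Newton

variable {ι R : Type*} [CommRing R] (I : Ideal R) (s : Finset ι) (f : ι → R)

theorem sum_powersetCard_prod_mem_of_sum_pow_mem {j : ℕ} (hj : IsUnit (j : R))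
    (hP : ∀ i, 1 ≤ i → i ≤ j → ∑ k ∈ s, f k ^ i ∈ I) :
    ∑ T ∈ s.powersetCard j, ∏ k ∈ T, f k ∈ I := by
  rw [← I.unit_mul_mem_iff_mem hj, mul_sum_powersetCard_prod_eq_sum]
  refine I.mul_mem_left _ (I.sum_mem fun a ha => I.mul_mem_left _ ?_)
  simp only [mem_filter, HasAntidiagonal.mem_antidiagonal] at ha
  exact hP a.2 (by omega) (by omega)

theorem sum_powersetCard_prod_mem_sq_of_sum_pow_mem {j : ℕ} (hj : 0 < j)
    (hunit : ∀ i, 1 ≤ i → i ≤ j → IsUnit (i : R))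
    (hP : ∀ i, 1 ≤ i → i ≤ j → ∑ k ∈ s, f k ^ i ∈ I) (hPj : ∑ k ∈ s, f k ^ j ∈ I ^ 2) :
    ∑ T ∈ s.powersetCard j, ∏ k ∈ T, f k ∈ I ^ 2 := by
  rw [← (I ^ 2).unit_mul_mem_iff_mem (hunit j hj le_rfl), mul_sum_powersetCard_prod_eq_sum]
  refine (I ^ 2).mul_mem_left _ ((I ^ 2).sum_mem fun a ha => ?_)
  simp only [mem_filter, HasAntidiagonal.mem_antidiagonal] at ha
  rcases Nat.eq_zero_or_pos a.1 with h0 | h0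
  · rw [h0, show a.2 = j by omega]
    simpa using hPj
  · rw [mul_assoc, sq]
    refine (I * I).mul_mem_left _ (Ideal.mul_mem_mul ?_ (hP a.2 (by omega) (by omega)))
    exact sum_powersetCard_prod_mem_of_sum_pow_mem I s f (hunit a.1 h0 ha.2.le)
      fun i hi1 hi2 => hP i hi1 (by omega)

end Newton

theorem one_add_pow_of_mul_self_eq_zero {R : Type*} [CommRing R] {t : R} (ht : t * t = 0)
    (m : ℕ) : (1 + t) ^ m = 1 + m * t := by
  induction m with
  | zero => simp
  | succ m ih =>
    rw [pow_succ, ih]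
    push_cast
    linear_combination (m : R) * ht

theorem pow_eq_of_mul_sub_eq_one {R : Type*} [CommRing R] {q k u w : R} (hq : q * q = 0)
    (hu : k * u = 1) (hw : (q - k) * w = 1) {m : ℕ} (hm : Odd m) :
    w ^ m = -u ^ m - m * q * u ^ (m + 1) := by
  have hw' : w = -u * (1 + q * u) := by
    linear_combination (-w) * ((-u ^ 2) * hq + (1 + q * u) * hu) + (-u * (1 + q * u)) * hw
  have hqu : q * u * (q * u) = 0 := by linear_combination u ^ 2 * hq
  rw [hw', mul_pow, hm.neg_pow, one_add_pow_of_mul_self_eq_zero hqu]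
  ring

theorem ZMod.castHom_inv {m n : ℕ} (h : m ∣ n) {a : ZMod n} (ha : IsUnit a) :
    castHom h (ZMod m) a⁻¹ = (castHom h (ZMod m) a)⁻¹ :=
  (ZMod.inv_eq_of_mul_eq_one _ _ _ (by rw [← map_mul, ZMod.mul_inv_of_unit _ ha, map_one])).symm

theorem ZMod.ker_castHom_sq (p : ℕ) [NeZero p] :
    RingHom.ker (castHom (dvd_pow_self p two_ne_zero) (ZMod p)) ^ 2 = ⊥ := by
  have hdvd {z : ZMod (p ^ 2)} (hz : castHom (dvd_pow_self p two_ne_zero) (ZMod p) z = 0) :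
      p ∣ z.val := by
    rwa [← ZMod.natCast_zmod_val z, map_natCast, ZMod.natCast_eq_zero_iff] at hz
  refine eq_bot_iff.2 ((sq _).le.trans (Ideal.mul_le.2 fun x hx y hy => ?_))
  rw [Ideal.mem_bot, ← ZMod.natCast_zmod_val x, ← ZMod.natCast_zmod_val y, ← Nat.cast_mul,
    ZMod.natCast_eq_zero_iff]
  exact (sq p).dvd.trans (mul_dvd_mul (hdvd hx) (hdvd hy))

theorem ZMod.isUnit_natCast_of_lt_prime {p k : ℕ} (hp : p.Prime) (hk : 0 < k) (hkp : k < p)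
    (e : ℕ) : IsUnit (k : ZMod (p ^ e)) :=
  (ZMod.isUnit_iff_coprime k _).2 ((Nat.coprime_of_lt_prime hk.ne' hkp hp).symm.pow_right e)

theorem ZMod.sum_Icc_natCast_eq_sum_units {p : ℕ} [Fact p.Prime] {M : Type*} [AddCommMonoid M]
    (g : ZMod p → M) : ∑ k ∈ Icc 1 (p - 1), g k = ∑ u : (ZMod p)ˣ, g u := by
  refine sum_bij' (fun k hk => Units.mk0 (k : ZMod p) ?_) (fun u _ => (u : ZMod p).val)
    (fun _ _ => mem_univ _) (fun u _ => ?_) (fun k hk => ?_) (fun u _ => ?_) (fun _ _ => rfl)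
  · rw [Ne, ZMod.natCast_eq_zero_iff]
    exact Nat.not_dvd_of_pos_of_lt (mem_Icc.1 hk).1 (by grind)
  · have := ZMod.val_lt (u : ZMod p)
    have := (ZMod.val_ne_zero _).2 u.ne_zero
    grind
  · simp [ZMod.val_cast_of_lt (show k < p by grind)]
  · exact Units.ext (ZMod.natCast_zmod_val _)

theorem ZMod.sum_Icc_inv_pow_eq_zero {p : ℕ} [Fact p.Prime] {m : ℕ} (hm : ¬ p - 1 ∣ m) :
    ∑ k ∈ Icc 1 (p - 1), ((k : ZMod p)⁻¹) ^ m = 0 := by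
  rw [sum_Icc_natCast_eq_sum_units fun x => (x⁻¹) ^ m]
  simp_rw [ZMod.inv_coe_unit]
  have := FiniteField.sum_pow_units (ZMod p) m
  rw [ZMod.card, if_neg hm] at this
  exact (Equiv.sum_comp (Equiv.inv _) fun u : (ZMod p)ˣ => (u : ZMod p) ^ m).trans this

theorem ZMod.sum_Icc_inv_pow_eq_zero_of_odd {p : ℕ} [hp : Fact p.Prime] (hodd : Odd p) {m : ℕ}
    (hm : Odd m) (hm1 : ¬ p - 1 ∣ m + 1) :
    ∑ k ∈ Icc 1 (p - 1), ((k : ZMod (p ^ 2))⁻¹) ^ m = 0 := by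
  set π := castHom (dvd_pow_self p two_ne_zero) (ZMod p)
  have hunit {k : ℕ} (hk : k ∈ Icc 1 (p - 1)) : IsUnit (k : ZMod (p ^ 2)) :=
    isUnit_natCast_of_lt_prime hp.out (mem_Icc.1 hk).1 (by grind) 2
  have hker {x y : ZMod (p ^ 2)} (hx : π x = 0) (hy : π y = 0) : x * y = 0 := by
    rw [← Ideal.mem_bot, ← ker_castHom_sq p, sq (RingHom.ker π)]
    exact Ideal.mul_mem_mul hx hy
  have hpT :
      (p : ZMod (p ^ 2)) * ∑ k ∈ Icc 1 (p - 1), ((k : ZMod (p ^ 2))⁻¹) ^ (m + 1) = 0 := by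
    refine hker (by rw [map_natCast, ZMod.natCast_self]) ?_
    rw [map_sum, ← sum_Icc_inv_pow_eq_zero hm1]
    refine sum_congr rfl fun k hk => ?_
    rw [map_pow, castHom_inv _ (hunit hk), map_natCast]
  have hreflect : ∑ k ∈ Icc 1 (p - 1), ((k : ZMod (p ^ 2))⁻¹) ^ m =
      ∑ k ∈ Icc 1 (p - 1), (((p - k : ℕ) : ZMod (p ^ 2))⁻¹) ^ m :=
    sum_nbij' (p - ·) (p - ·) (by grind) (by grind) (by grind) (by grind)
      fun k hk => by rw [Nat.sub_sub_self (by grind)]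
  have hterm : ∀ k ∈ Icc 1 (p - 1), (((p - k : ℕ) : ZMod (p ^ 2))⁻¹) ^ m =
      -((k : ZMod (p ^ 2))⁻¹) ^ m - m * p * ((k : ZMod (p ^ 2))⁻¹) ^ (m + 1) := by
    intro k hk
    refine pow_eq_of_mul_sub_eq_one (by rw [← Nat.cast_mul, ← sq, ZMod.natCast_self])
      (mul_inv_of_unit _ (hunit hk)) ?_ hm
    rw [← Nat.cast_sub (by grind)]
    exact mul_inv_of_unit _ (hunit (by grind))
  have h2 : IsUnit (2 : ZMod (p ^ 2)) := by
    obtain ⟨r, rfl⟩ := hodd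
    exact_mod_cast isUnit_natCast_of_lt_prime hp.out two_pos (by grind [hp.out.two_le]) 2
  rw [← h2.mul_right_eq_zero, two_mul]
  nth_rw 1 [hreflect]
  rw [sum_congr rfl hterm, sum_sub_distrib, sum_neg_distrib, ← mul_sum, mul_assoc, hpT]
  ring

section PowersetSums

variable {p : ℕ} [hp : Fact p.Prime] {s j : ℕ}

theorem sum_powersetCard_prod_inv_pow_eq_zero (hj : 0 < j) (hjp : j < p)
    (hdiv : ∀ i, 1 ≤ i → i ≤ j → ¬ p - 1 ∣ i * s) :
    ∑ T ∈ (Icc 1 (p - 1)).powersetCard j, ∏ k ∈ T, ((k : ZMod p)⁻¹) ^ s = 0 := by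
  rw [← Ideal.mem_bot]
  refine sum_powersetCard_prod_mem_of_sum_pow_mem ⊥ _ _ ?_ fun i hi1 hi2 => ?_
  · exact (ZMod.isUnit_iff_coprime j p).2 (Nat.coprime_of_lt_prime hj.ne' hjp hp.out).symm
  · simp_rw [Ideal.mem_bot, ← pow_mul]
    exact ZMod.sum_Icc_inv_pow_eq_zero (mul_comm i s ▸ hdiv i hi1 hi2)

theorem sum_powersetCard_prod_inv_pow_eq_zero_of_odd (hodd : Odd p) (hj : 0 < j) (hjp : j < p)
    (hdiv : ∀ i, 1 ≤ i → i ≤ j → ¬ p - 1 ∣ i * s) (hjs : Odd (j * s))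
    (hdivj : ¬ p - 1 ∣ j * s + 1) :
    ∑ T ∈ (Icc 1 (p - 1)).powersetCard j, ∏ k ∈ T, ((k : ZMod (p ^ 2))⁻¹) ^ s = 0 := by
  rw [← Ideal.mem_bot, ← ZMod.ker_castHom_sq p]
  refine sum_powersetCard_prod_mem_sq_of_sum_pow_mem _ _ _ hj
    (fun i hi _ => ZMod.isUnit_natCast_of_lt_prime hp.out hi (by omega) 2)
    (fun i hi1 hi2 => ?_) ?_
  · rw [RingHom.mem_ker, map_sum,
      ← ZMod.sum_Icc_inv_pow_eq_zero (mul_comm i s ▸ hdiv i hi1 hi2)]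
    refine sum_congr rfl fun k hk => ?_
    have hunit : IsUnit (k : ZMod (p ^ 2)) :=
      ZMod.isUnit_natCast_of_lt_prime hp.out (mem_Icc.1 hk).1 (by grind) 2
    rw [map_pow, map_pow, ZMod.castHom_inv _ hunit, map_natCast, pow_mul]
  · rw [ZMod.ker_castHom_sq, Ideal.mem_bot]
    simp_rw [← pow_mul]
    exact ZMod.sum_Icc_inv_pow_eq_zero_of_odd hodd (mul_comm j s ▸ hjs) (mul_comm j s ▸ hdivj)

end PowersetSums

def clearedMhs (n s l : ℕ) : ℕ :=
  ∑ T ∈ (Icc 1 n).powersetCard l, ∏ k ∈ T, (n ! / k) ^ s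

theorem natCast_clearedMhs {R : Type*} [CommRing R] {n s l : ℕ} {u : ℕ → R}
    (hu : ∀ k ∈ Icc 1 n, (k : R) * u k = 1) :
    (clearedMhs n s l : R) = (n ! : R) ^ (l * s) *
      ∑ T ∈ (Icc 1 n).powersetCard l, ∏ k ∈ T, u k ^ s := by
  rw [clearedMhs, mul_sum]
  push_cast
  refine sum_congr rfl fun T hT => ?_
  obtain ⟨hTsub, hTcard⟩ := mem_powersetCard.1 hT
  have hdiv : ∀ k ∈ T, ((n ! / k : ℕ) : R) = n ! * u k := fun k hk => by
    have hkn := mem_Icc.1 (hTsub hk)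
    rw [← mul_one ((n ! / k : ℕ) : R), ← hu k (hTsub hk), ← mul_assoc, ← Nat.cast_mul,
      Nat.div_mul_cancel (Nat.dvd_factorial hkn.1 hkn.2)]
  rw [prod_congr rfl fun k hk => by rw [hdiv k hk, mul_pow], prod_mul_distrib, prod_const,
    hTcard, ← pow_mul, mul_comm s]

theorem mhs_replicate_mul_factorial_pow (n s l : ℕ) :
    mhs (List.replicate l s) n * ((n ! ^ (l * s) : ℕ) : ℚ) = clearedMhs n s l := by
  rw [natCast_clearedMhs fun k hk => mul_inv_cancel₀ (Nat.cast_ne_zero.2 (by grind)),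
    mhs_eq_sum_powersetCard (fun _ => List.getElem_replicate _) n, List.length_replicate]
  push_cast
  ring

theorem le_padicValRat_of_mul_natCast_eq {p : ℕ} [Fact p.Prime] {q : ℚ} {D N e : ℕ}
    (hD : ¬ p ∣ D) (hN : p ^ e ∣ N) (h : q * D = N) : q = 0 ∨ (e : ℤ) ≤ padicValRat p q := by
  rcases eq_or_ne q 0 with hq | hq
  · exact Or.inl hq
  have hD0 : D ≠ 0 := by rintro rfl; exact hD (dvd_zero p)
  have hN0 : N ≠ 0 := by rintro rfl; simp_all
  have := congrArg (padicValRat p) h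
  rw [padicValRat.mul hq (by exact_mod_cast hD0), padicValRat.of_nat, padicValRat.of_nat,
    padicValNat.eq_zero_of_not_dvd hD] at this
  right
  have := (padicValNat_dvd_iff_le hN0).1 hN
  omega

theorem stmt0_general (s l p : ℕ) (hl : 0 < l) (hp : p.Prime) (hodd : Odd p)
    (hpl : l + 2 ≤ p)
    (hdiv : ∀ k, 1 ≤ k → k ≤ l → ¬ (p - 1) ∣ (k * s) ∧ ¬ (p - 1) ∣ (k * s + 1)) :
    (Even (l * s) →
      (mhs (List.replicate l s) (p - 1) = 0 ∨
        1 ≤ padicValRat p (mhs (List.replicate l s) (p - 1)))) ∧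
    (Odd (l * s) →
      (mhs (List.replicate l s) (p - 1) = 0 ∨
        2 ≤ padicValRat p (mhs (List.replicate l s) (p - 1)))) := by
  have : Fact p.Prime := ⟨hp⟩
  have hD : ¬ p ∣ (p - 1)! ^ (l * s) := fun h => by
    have := (Nat.Prime.dvd_factorial hp).1 (hp.dvd_of_dvd_pow h)
    omega
  have hrange (k : ℕ) (hk : k ∈ Icc 1 (p - 1)) : 0 < k ∧ k < p := by grind
  have hdiv' i hi1 hi2 := (hdiv i hi1 hi2).1
  refine ⟨fun _ => ?_, fun hls => ?_⟩
  · refine le_padicValRat_of_mul_natCast_eq (e := 1) hD ?_ (mhs_replicate_mul_factorial_pow _ _ _)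
    have hne (k : ℕ) (hk : k ∈ Icc 1 (p - 1)) : (k : ZMod p) ≠ 0 := by
      rw [Ne, ZMod.natCast_eq_zero_iff]
      exact Nat.not_dvd_of_pos_of_lt (hrange k hk).1 (hrange k hk).2
    rw [pow_one, ← ZMod.natCast_eq_zero_iff,
      natCast_clearedMhs fun k hk => mul_inv_cancel₀ (hne k hk),
      sum_powersetCard_prod_inv_pow_eq_zero hl (by omega) hdiv', mul_zero]
  · refine le_padicValRat_of_mul_natCast_eq (e := 2) hD ?_ (mhs_replicate_mul_factorial_pow _ _ _)
    rw [← ZMod.natCast_eq_zero_iff, natCast_clearedMhs fun k hk => ZMod.mul_inv_of_unit _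
      (ZMod.isUnit_natCast_of_lt_prime hp (hrange k hk).1 (hrange k hk).2 2),
      sum_powersetCard_prod_inv_pow_eq_zero_of_odd hodd hl (by omega) hdiv' hls
        (hdiv l hl le_rfl).2, mul_zero]

/-- Wolstenholme type theorem for homogeneous multiple harmonic sums:
if `p` is an odd prime, `p ≥ l+2` and `p-1` divides none of `ks`, `ks+1` for
`k = 1,…,l`, then `v_p(H({s}^l; p-1)) ≥ 1` if `ls` is even and `≥ 2` if `ls` is odd
(with `v_p(0) = ∞`). -/
theorem stmt0 (s l p : ℕ) (hs : 0 < s) (hl : 0 < l) (hp : p.Prime) (hodd : Odd p)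
    (hpl : l + 2 ≤ p)
    (hdiv : ∀ k, 1 ≤ k → k ≤ l → ¬ (p - 1) ∣ (k * s) ∧ ¬ (p - 1) ∣ (k * s + 1)) :
    (Even (l * s) →
      (mhs (List.replicate l s) (p - 1) = 0 ∨
        1 ≤ padicValRat p (mhs (List.replicate l s) (p - 1)))) ∧
    (Odd (l * s) →
      (mhs (List.replicate l s) (p - 1) = 0 ∨
        2 ≤ padicValRat p (mhs (List.replicate l s) (p - 1)))) :=
  stmt0_general s l p hl hp hodd hpl hdiv
end

section
/- (Criterion Theorem) Let l ≥ 2 be an integer, p a prime, and t₀ ≥ 1 the integer with p^{t₀-1} ≤ l < p^{t₀}. Let s = (s₁,…,s_l) be a tuple of positive integers, let |s| = s₁+⋯+s_l and m = min{sᵢ : 1 ≤ i ≤ l}. For t ≥ 1 set f(s,p;t) = min{ -v_p(H(s;n)) : p^{t-1} ≤ n < p^t }. If there exists an integer τ > t₀ such that f(s,p;τ) > (|s|-m)(τ-1) - m, then the set J(s|p) = {n ≥ 0 : p divides the numerator of H(s;n)} is finite. -/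
/-!
Splitting the index tuples of `H(s;n)` according to whether all indices are divisible by `p`
gives `H(s;n) = p^(-|s|) H(s;⌊n/p⌋) + R`, where every term of `R` has an index prime to `p`,
so `v_p(R) ≥ -(|s| - m) t` when `n < p^(t+1)`. Hence if `-v_p(H(s;n)) > (|s| - m)(t - 1) - m`
on `p^(t-1) ≤ n < p^t`, the main term strictly dominates on the next range and the bound
propagates to every `t ≥ τ`. As `|s| ≥ 2m`, the bound is nonnegative for `t ≥ 2`, so
`v_p(H(s;n)) < 0` and `p` cannot divide the numerator once `n ≥ p^τ`.
-/

open Finset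

section Valuation

variable {p : ℕ} [Fact p.Prime]

lemma padicValRat_prod {ι : Type*} (T : Finset ι) (f : ι → ℚ) (hf : ∀ i ∈ T, f i ≠ 0) :
    padicValRat p (∏ i ∈ T, f i) = ∑ i ∈ T, padicValRat p (f i) := by
  induction T using Finset.cons_induction with
  | empty => simp
  | cons a T _ ih =>
    rw [prod_cons, sum_cons, padicValRat.mul (hf a (mem_cons_self a T))
      (prod_ne_zero_iff.mpr fun i hi => hf i (mem_cons_of_mem hi)),
      ih fun i hi => hf i (mem_cons_of_mem hi)]

lemma le_padicValRat_sum {ι : Type*} {T : Finset ι} {f : ι → ℚ} {c : ℤ}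
    (hf : ∀ i ∈ T, c ≤ padicValRat p (f i)) (hT : ∑ i ∈ T, f i ≠ 0) :
    c ≤ padicValRat p (∑ i ∈ T, f i) := by
  induction T using Finset.cons_induction with
  | empty => simp at hT
  | cons a T _ ih =>
    rw [sum_cons] at hT ⊢
    have hfa := hf a (mem_cons_self a T)
    by_cases hT0 : ∑ i ∈ T, f i = 0
    · rwa [hT0, add_zero]
    exact (le_min hfa (ih (fun i hi => hf i (mem_cons_of_mem hi)) hT0)).trans
      (padicValRat.min_le_padicValRat_add hT)

lemma padicValRat_add_eq_left_of_lt {q r : ℚ} {c : ℤ} (hq : q ≠ 0)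
    (hqc : padicValRat p q < c) (hr : r ≠ 0 → c ≤ padicValRat p r) :
    q + r ≠ 0 ∧ padicValRat p (q + r) = padicValRat p q := by
  by_cases hr0 : r = 0
  · simp [hr0, hq]
  have hlt := hqc.trans_le (hr hr0)
  have hqr : q + r ≠ 0 := by
    intro h
    rw [eq_neg_of_add_eq_zero_right h, padicValRat.neg] at hlt
    exact hlt.false
  exact ⟨hqr, padicValRat.add_eq_of_lt hqr hq hr0 hlt⟩

lemma not_dvd_num_of_padicValRat_neg {q : ℚ} (hq : padicValRat p q < 0) :
    ¬ (p : ℤ) ∣ q.num := by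
  intro hnum
  have hden : ¬ p ∣ q.den := fun hden =>
    (Fact.out : p.Prime).one_lt.ne' <|
      Nat.dvd_one.mp (q.reduced ▸ Nat.dvd_gcd (Int.natCast_dvd.mp hnum) hden)
  have : padicValRat p q = padicValInt p q.num - padicValNat p q.den := rfl
  rw [this, padicValNat.eq_zero_of_not_dvd hden] at hq
  omega

lemma neg_mul_le_padicValRat_prod_one_div_pow {ι : Type*} [Fintype ι] [DecidableEq ι]
    {t M : ℕ} (e k : ι → ℕ) (hk : ∀ i, k i ≠ 0) (hkt : ∀ i, k i < p ^ (t + 1)) {i₀ : ι}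
    (hi₀ : ¬ p ∣ k i₀) (hM : M ≤ e i₀) :
    -(((∑ i, (e i : ℤ)) - M) * t) ≤ padicValRat p (∏ i, 1 / ((k i : ℚ) ^ e i)) := by
  have hv : ∀ i, padicValRat p (1 / ((k i : ℚ) ^ e i)) = -(e i * padicValNat p (k i)) := by
    intro i
    rw [one_div, padicValRat.inv, padicValRat.pow, padicValRat.of_nat]
  have hvt : ∀ i, padicValNat p (k i) ≤ t := fun i =>
    (padicValNat_le_nat_log _).trans (Nat.lt_succ_iff.mp (Nat.log_lt_of_lt_pow (hk i) (hkt i)))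
  rw [padicValRat_prod _ _ fun i _ => by simp [hk i], sum_congr rfl fun i _ => hv i,
    sum_neg_distrib, neg_le_neg_iff,
    ← sum_erase (a := i₀) _ (by simp [padicValNat.eq_zero_of_not_dvd hi₀] : _ = (0 : ℤ))]
  calc ∑ i ∈ univ.erase i₀, (e i : ℤ) * padicValNat p (k i)
      ≤ ∑ i ∈ univ.erase i₀, (e i : ℤ) * t := by gcongr with i; exact_mod_cast hvt i
    _ = ((∑ i, (e i : ℤ)) - e i₀) * t := by rw [← sum_mul, sum_erase_eq_sub (mem_univ i₀)]
    _ ≤ ((∑ i, (e i : ℤ)) - M) * t := by gcongr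

end Valuation

lemma prod_one_div_mul_pow {K ι : Type*} [Field K] (T : Finset ι) (c : K) (e : ι → ℕ)
    (x : ι → K) :
    ∏ i ∈ T, 1 / ((c * x i) ^ e i) = (c ^ ∑ i ∈ T, e i)⁻¹ * ∏ i ∈ T, 1 / (x i ^ e i) := by
  simp only [mul_pow, one_div, mul_inv, prod_mul_distrib, prod_inv_distrib, prod_pow_eq_pow_sum]

open Classical in
lemma sum_multiples_eq_inv_pow_mul_mhs_div {p : ℕ} (hp : 0 < p) (s : List ℕ) (n : ℕ) :
    ∑ k ∈ univ.filter (fun k : Fin s.length → Fin (n + 1) =>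
        (StrictMono k ∧ ∀ i, 1 ≤ (k i : ℕ)) ∧ ∀ i, p ∣ (k i : ℕ)),
      ∏ i, 1 / (((k i : ℕ) : ℚ) ^ s.get i) = ((p : ℚ) ^ s.sum)⁻¹ * mhs s (n / p) := by
  have hdiv (a : Fin (n + 1)) : (a : ℕ) / p < n / p + 1 :=
    Nat.lt_succ_of_le (Nat.div_le_div_right (Nat.lt_succ_iff.mp a.isLt))
  have hmul (b : Fin (n / p + 1)) : p * b < n + 1 :=
    Nat.lt_succ_of_le ((Nat.mul_le_mul_left p (Nat.lt_succ_iff.mp b.isLt)).trans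
      (Nat.mul_div_le n p))
  rw [mhs, mul_sum]
  refine sum_nbij' (fun k i => ⟨k i / p, hdiv (k i)⟩) (fun j i => ⟨p * j i, hmul (j i)⟩)
    ?_ ?_ ?_ ?_ ?_
  · intro k hk
    simp only [mem_filter, mem_univ, true_and] at hk ⊢
    obtain ⟨⟨hmono, hone⟩, hdvd⟩ := hk
    refine ⟨fun i i' hii => Nat.div_lt_div_of_lt_of_dvd (hdvd i') (hmono hii), fun i => ?_⟩
    exact (Nat.one_le_div_iff hp).mpr (Nat.le_of_dvd (hone i) (hdvd i))
  · intro j hj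
    simp only [mem_filter, mem_univ, true_and] at hj ⊢
    obtain ⟨hmono, hone⟩ := hj
    refine ⟨⟨fun i i' hii => ?_, fun i => ?_⟩, fun i => dvd_mul_right p _⟩
    · exact Nat.mul_lt_mul_left hp |>.mpr (hmono hii)
    · exact Nat.one_le_iff_ne_zero.mpr (mul_ne_zero hp.ne' (Nat.one_le_iff_ne_zero.mp (hone i)))
  · intro k hk
    simp only [mem_filter, mem_univ, true_and] at hk
    funext i
    exact Fin.ext (Nat.mul_div_cancel' (hk.2 i))
  · intro j _
    funext i
    exact Fin.ext (Nat.mul_div_cancel_left _ hp)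
  · intro k hk
    simp only [mem_filter, mem_univ, true_and] at hk
    have hk' : ∀ i, ((k i : ℕ) : ℚ) = p * ((k i / p : ℕ) : ℚ) := fun i => by
      rw [← Nat.cast_mul, Nat.mul_div_cancel' (hk.2 i)]
    simp only [hk', prod_one_div_mul_pow, ← List.sum_ofFn, List.ofFn_get]

section Criterion

variable {p : ℕ} [Fact p.Prime] {s : List ℕ} {m : ℕ}

lemma exists_mhs_eq_inv_pow_mul_mhs_div_add (hmin : ∀ a ∈ s, m ≤ a) {n t : ℕ}
    (hn : n < p ^ (t + 1)) :
    ∃ R : ℚ, mhs s n = ((p : ℚ) ^ s.sum)⁻¹ * mhs s (n / p) + R ∧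
      (R ≠ 0 → -(((s.sum : ℤ) - m) * t) ≤ padicValRat p R) := by
  classical
  refine ⟨∑ k ∈ univ.filter (fun k : Fin s.length → Fin (n + 1) =>
      (StrictMono k ∧ ∀ i, 1 ≤ (k i : ℕ)) ∧ ¬ ∀ i, p ∣ (k i : ℕ)),
      ∏ i, 1 / (((k i : ℕ) : ℚ) ^ s.get i), ?_, le_padicValRat_sum fun k hk => ?_⟩
  · rw [mhs, ← sum_filter_add_sum_filter_not _ (fun k => ∀ i, p ∣ (k i : ℕ)), filter_filter,
      filter_filter, sum_multiples_eq_inv_pow_mul_mhs_div (Fact.out : p.Prime).pos]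
  simp only [mem_filter, mem_univ, true_and, not_forall] at hk
  obtain ⟨⟨-, hone⟩, i₀, hi₀⟩ := hk
  have hsum : ∑ i, (s.get i : ℤ) = s.sum := by
    rw [← Nat.cast_sum, ← List.sum_ofFn, List.ofFn_get]
  rw [← hsum]
  exact neg_mul_le_padicValRat_prod_one_div_pow (fun i => s.get i) (fun i => k i)
    (fun i => Nat.one_le_iff_ne_zero.mp (hone i)) (fun i => (k i).isLt.trans_le hn) hi₀
    (hmin _ (List.get_mem s i₀))

variable (p s m) in
/-- `f(s,p;t) > (|s| - m)(t - 1) - m`, with `H(s;n) ≠ 0` on the whole range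
`p^(t-1) ≤ n < p^t`. -/
def MhsCriterion (t : ℕ) : Prop :=
  ∀ n : ℕ, p ^ (t - 1) ≤ n → n < p ^ t →
    mhs s n ≠ 0 ∧ ((s.sum : ℤ) - m) * ((t : ℤ) - 1) - m < -(padicValRat p (mhs s n))

lemma MhsCriterion.succ (hmin : ∀ a ∈ s, m ≤ a) {t : ℕ} (ht : 1 ≤ t)
    (h : MhsCriterion p s m t) : MhsCriterion p s m (t + 1) := by
  intro n hn₁ hn₂
  rw [Nat.add_sub_cancel] at hn₁
  have hp := (Fact.out : p.Prime).pos
  obtain ⟨hq, hqv⟩ := h (n / p)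
    ((Nat.le_div_iff_mul_le hp).mpr ((pow_sub_one_mul (by omega) p).trans_le hn₁))
    ((Nat.div_lt_iff_lt_mul hp).mpr (pow_succ p t ▸ hn₂))
  obtain ⟨R, hsplit, hR⟩ := exists_mhs_eq_inv_pow_mul_mhs_div_add hmin hn₂
  have hpow : ((p : ℚ) ^ s.sum)⁻¹ ≠ 0 := by simp [hp.ne']
  have hmain : padicValRat p (((p : ℚ) ^ s.sum)⁻¹ * mhs s (n / p)) =
      -(s.sum : ℤ) + padicValRat p (mhs s (n / p)) := by
    rw [padicValRat.mul hpow hq, padicValRat.self_pow_inv]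
  obtain ⟨hne, hval⟩ := padicValRat_add_eq_left_of_lt (mul_ne_zero hpow hq)
    (c := -(((s.sum : ℤ) - m) * t)) (by rw [hmain]; linarith) hR
  refine ⟨hsplit ▸ hne, ?_⟩
  rw [hsplit, hval, hmain, Nat.cast_succ, add_sub_cancel_right]
  linarith

lemma MhsCriterion.of_le (hmin : ∀ a ∈ s, m ≤ a) {τ t : ℕ} (hτ : 1 ≤ τ)
    (h : MhsCriterion p s m τ) (ht : τ ≤ t) : MhsCriterion p s m t := by
  induction t, ht using Nat.le_induction with
  | base => exact h
  | succ t ht ih => exact ih.succ hmin (hτ.trans ht)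

lemma MhsCriterion.padicValRat_neg (hmin : ∀ a ∈ s, m ≤ a) (hsm : 2 * m ≤ s.sum) {τ n : ℕ}
    (hτ : 1 ≤ τ) (h : MhsCriterion p s m τ) (hn : p ^ τ ≤ n) :
    padicValRat p (mhs s n) < 0 := by
  have hp := (Fact.out : p.Prime).one_lt
  have hn0 : n ≠ 0 := ((pow_pos (zero_lt_one.trans hp) τ).trans_le hn).ne'
  have hlog : τ ≤ Nat.log p n := Nat.le_log_of_pow_le hp hn
  obtain ⟨-, hv⟩ := (h.of_le hmin hτ (by omega : τ ≤ Nat.log p n + 1)) n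
    (Nat.pow_log_le_self p hn0) (Nat.lt_pow_succ_log_self hp n)
  have hsm' : (2 * m : ℤ) ≤ s.sum := by exact_mod_cast hsm
  have hlog' : (τ : ℤ) ≤ Nat.log p n := by exact_mod_cast hlog
  rw [Nat.cast_succ, add_sub_cancel_right] at hv
  nlinarith

end Criterion

theorem stmt1_general (l p : ℕ) (hl : 2 ≤ l) (hp : p.Prime)
    (s : List ℕ) (hlen : s.length = l)
    (t₀ : ℕ)
    (m : ℕ) (hmin : ∀ a ∈ s, m ≤ a)
    (hcrit : ∃ τ : ℕ, t₀ < τ ∧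
      ∀ n : ℕ, p ^ (τ - 1) ≤ n → n < p ^ τ →
        mhs s n ≠ 0 ∧
          ((s.sum : ℤ) - m) * ((τ : ℤ) - 1) - m < -(padicValRat p (mhs s n))) :
    {n : ℕ | (p : ℤ) ∣ (mhs s n).num}.Finite := by
  have : Fact p.Prime := ⟨hp⟩
  obtain ⟨τ, hτ, hcrit⟩ := hcrit
  have hsm : 2 * m ≤ s.sum := calc
    2 * m ≤ s.length * m := Nat.mul_le_mul_right m (hlen ▸ hl)
    _ ≤ s.sum := List.card_nsmul_le_sum s m hmin
  refine (Set.finite_Iio (p ^ τ)).subset fun n hn => ?_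
  by_contra hbig
  exact not_dvd_num_of_padicValRat_neg
    (MhsCriterion.padicValRat_neg hmin hsm (by omega) hcrit (not_lt.mp hbig)) hn

/-- Criterion Theorem: if for some `τ > t₀` (where `p^{t₀-1} ≤ l < p^{t₀}`) the minimum
`f(s,p;τ)` of `-v_p(H(s;n))` over `p^{τ-1} ≤ n < p^τ` exceeds `(|s|-m)(τ-1) - m`
(in particular all these values are finite, i.e. `H(s;n) ≠ 0` there), then the set of
`n` with `p` dividing the numerator of `H(s;n)` is finite. -/
theorem stmt1 (l p : ℕ) (hl : 2 ≤ l) (hp : p.Prime)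
    (s : List ℕ) (hlen : s.length = l) (hpos : ∀ a ∈ s, 0 < a)
    (t₀ : ℕ) (ht₀ : 1 ≤ t₀) (ht₀l : p ^ (t₀ - 1) ≤ l) (hlt₀ : l < p ^ t₀)
    (m : ℕ) (hm : m ∈ s) (hmin : ∀ a ∈ s, m ≤ a)
    (hcrit : ∃ τ : ℕ, t₀ < τ ∧
      ∀ n : ℕ, p ^ (τ - 1) ≤ n → n < p ^ τ →
        mhs s n ≠ 0 ∧
          ((s.sum : ℤ) - m) * ((τ : ℤ) - 1) - m < -(padicValRat p (mhs s n))) :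
    {n : ℕ | (p : ℤ) ∣ (mhs s n).num}.Finite :=
  stmt1_general l p hl hp s hlen t₀ m hmin hcrit
end

section
/- Let p be a prime, s and l positive integers, and n a nonnegative integer with ñ = ⌊n/p⌋. Then H({s}^l;n) = Σ_{k=0}^{l} p^{-ks} · H({s}^k; ñ) · H*({s}^{l-k}; n), where by convention H({s}^0;m) = H*({s}^0;m) = 1 for every m. -/
open Finset

namespace Multiset

variable {R : Type*} [CommSemiring R]

theorem esymm_zero_right (s : Multiset R) : s.esymm 0 = 1 := by
  simp [esymm]

theorem esymm_cons_succ (a : R) (s : Multiset R) (n : ℕ) :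
    (a ::ₘ s).esymm (n + 1) = s.esymm (n + 1) + a * s.esymm n := by
  simp [esymm, powersetCard_cons, sum_map_mul_left]

theorem esymm_add (s t : Multiset R) (n : ℕ) :
    (s + t).esymm n = ∑ x ∈ Finset.HasAntidiagonal.antidiagonal n, s.esymm x.1 * t.esymm x.2 := by
  induction s using Multiset.induction_on generalizing n with
  | empty => cases n <;> simp [esymm, Finset.Nat.sum_antidiagonal_succ, powersetCard_zero_right]
  | cons a s ih =>
    cases n with
    | zero => simp [esymm_zero_right]
    | succ n =>
      rw [cons_add, esymm_cons_succ, ih, ih, Finset.Nat.sum_antidiagonal_succ,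
        Finset.Nat.sum_antidiagonal_succ]
      simp only [esymm_cons_succ, esymm_zero_right, add_mul, sum_add_distrib, mul_sum, mul_assoc]
      ring

end Multiset

theorem sum_strictMono_prod_eq_esymm {α R : Type*} [LinearOrder α] [Fintype α] [CommSemiring R]
    (s : Finset α) (f : α → R) (L : ℕ) :
    ∑ k ∈ univ.filter (fun k : Fin L → α => StrictMono k ∧ ∀ i, k i ∈ s), ∏ i, f (k i) =
      (s.val.map f).esymm L := by
  rw [Finset.esymm_map_val]
  refine sum_bij' (fun k _ => univ.image k)
    (fun S hS => S.orderEmbOfFin (mem_powersetCard.1 hS).2) ?_ ?_ ?_ ?_ ?_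
  · intro k hk
    simp only [mem_filter, mem_univ, true_and] at hk
    rw [mem_powersetCard, card_image_of_injective _ hk.1.injective, card_univ, Fintype.card_fin]
    exact ⟨by simpa [subset_iff] using hk.2, rfl⟩
  · intro S hS
    simp only [mem_filter, mem_univ, true_and]
    exact ⟨(S.orderEmbOfFin _).strictMono,
      fun i => (mem_powersetCard.1 hS).1 (orderEmbOfFin_mem _ _ i)⟩
  · intro k hk
    simp only [mem_filter, mem_univ, true_and] at hk
    exact (orderEmbOfFin_unique _ (fun i => mem_image_of_mem k (mem_univ i)) hk.1).symm
  · intro S hS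
    exact image_orderEmbOfFin_univ S _
  · intro k hk
    simp only [mem_filter, mem_univ, true_and] at hk
    rw [prod_image fun i _ j _ h => hk.1.injective h]

theorem Nat.Icc_filter_dvd_eq_image (p n : ℕ) :
    (Icc 1 n).filter (p ∣ ·) = (Icc 1 (n / p)).image (p * ·) := by
  rcases Nat.eq_zero_or_pos p with rfl | hp
  · ext x; simp; omega
  ext x
  simp only [mem_filter, mem_Icc, mem_image]
  constructor
  · rintro ⟨⟨h1, hn⟩, m, rfl⟩
    exact ⟨m, ⟨Nat.pos_of_mul_pos_left h1, (Nat.le_div_iff_mul_le hp).2 (by linarith)⟩, rfl⟩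
  · rintro ⟨m, ⟨h1, hm⟩, rfl⟩
    have hmn := (Nat.le_div_iff_mul_le hp).1 hm
    exact ⟨⟨Nat.mul_pos hp h1, by linarith⟩, dvd_mul_right p m⟩

theorem sum_strictMono_fin_prod_eq_esymm {R : Type*} [CommSemiring R] (n L : ℕ) (s : Finset ℕ)
    (hs : s ⊆ range (n + 1)) (g : ℕ → R) :
    ∑ k ∈ univ.filter (fun k : Fin L → Fin (n + 1) => StrictMono k ∧ ∀ i, (k i : ℕ) ∈ s),
      ∏ i, g (k i) = (s.val.map g).esymm L := by
  have hs' : (univ.filter fun m : Fin (n + 1) => (m : ℕ) ∈ s).map Fin.valEmbedding = s := by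
    ext m
    simp only [mem_map, mem_filter, mem_univ, true_and, Fin.valEmbedding_apply]
    exact ⟨by rintro ⟨i, hi, rfl⟩; exact hi, fun hm => ⟨⟨m, mem_range.1 (hs hm)⟩, hm, rfl⟩⟩
  conv_rhs => rw [← hs', map_val, Multiset.map_map, ← sum_strictMono_prod_eq_esymm]
  simp

theorem mhs_replicate_eq_esymm (l s n : ℕ) :
    mhs (List.replicate l s) n = ((Icc 1 n).val.map fun m : ℕ => 1 / (m : ℚ) ^ s).esymm l := by
  rw [mhs]
  conv_rhs => rw [← List.length_replicate (a := s) (n := l)]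
  rw [← sum_strictMono_fin_prod_eq_esymm n _ (Icc 1 n) (fun m hm => by simp at hm ⊢; omega)]
  refine sum_congr (filter_congr fun k _ => ?_) fun k _ => ?_
  · simp [Fin.is_le]
  · simp

theorem mhsStar_replicate_eq_esymm (p l s n : ℕ) :
    mhsStar p (List.replicate l s) n =
      (((Icc 1 n).filter (¬ p ∣ ·)).val.map fun m : ℕ => 1 / (m : ℚ) ^ s).esymm l := by
  rw [mhsStar]
  conv_rhs => rw [← List.length_replicate (a := s) (n := l)]
  rw [← sum_strictMono_fin_prod_eq_esymm n _ _ (fun m hm => by simp at hm ⊢; omega)]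
  refine sum_congr (filter_congr fun k _ => ?_) fun k _ => ?_
  · simp [Fin.is_le]
  · simp

theorem esymm_map_one_div_pow_Icc_filter_dvd (p n s k : ℕ) :
    (((Icc 1 n).filter (p ∣ ·)).val.map fun m : ℕ => 1 / (m : ℚ) ^ s).esymm k =
      1 / (p : ℚ) ^ (k * s) * mhs (List.replicate k s) (n / p) := by
  have hinj : Set.InjOn (p * ·) (Icc 1 (n / p) : Set ℕ) := by
    intro a ha b _ hab
    have hp : p ≠ 0 := by rintro rfl; simp at ha
    exact Nat.eq_of_mul_eq_mul_left (Nat.pos_of_ne_zero hp) hab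
  rw [Nat.Icc_filter_dvd_eq_image, image_val_of_injOn hinj, Multiset.map_map,
    mhs_replicate_eq_esymm, mul_comm k, pow_mul, ← one_div_pow, ← smul_eq_mul,
    Multiset.pow_smul_esymm, Multiset.map_map]
  congr 2
  ext m
  simp [mul_pow, mul_comm]

theorem stmt4_general (p s l n : ℕ) :
    mhs (List.replicate l s) n =
      ∑ k ∈ Finset.range (l + 1),
        (1 / (p : ℚ) ^ (k * s)) * mhs (List.replicate k s) (n / p) *
          mhsStar p (List.replicate (l - k) s) n := by
  have hsplit :
      (Icc 1 n).val = ((Icc 1 n).filter (p ∣ ·)).val + ((Icc 1 n).filter (¬ p ∣ ·)).val := by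
    rw [filter_val, filter_val, Multiset.filter_add_not]
  rw [mhs_replicate_eq_esymm, hsplit, Multiset.map_add, Multiset.esymm_add,
    Nat.sum_antidiagonal_eq_sum_range_succ_mk]
  refine sum_congr rfl fun k _ => ?_
  rw [esymm_map_one_div_pow_Icc_filter_dvd, mhsStar_replicate_eq_esymm]

/-- `H({s}^l;n) = ∑_{k=0}^{l} p^{-ks} · H({s}^k; ⌊n/p⌋) · H*({s}^{l-k}; n)`. -/
theorem stmt4 (p s l n : ℕ) (hp : p.Prime) (hs : 0 < s) (hl : 0 < l) :
    mhs (List.replicate l s) n =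
      ∑ k ∈ Finset.range (l + 1),
        (1 / (p : ℚ) ^ (k * s)) * mhs (List.replicate k s) (n / p) *
          mhsStar p (List.replicate (l - k) s) n :=
  stmt4_general p s l n
end

section
/- Let p be an odd prime and s a positive integer such that p-1 divides neither s nor s+1. Then for every positive integer n, the sum H*(s;pn) = Σ_{1 ≤ k ≤ pn, p∤k} k^{-s} satisfies v_p(H*(s;pn)) ≥ 1 if s is even, and v_p(H*(s;pn)) ≥ 2 if s is odd. -/
open Finset

/-- square-zero binomial -/
lemma sqZero_add_pow {R : Type*} [CommRing R] (x y : R) (hy : y * y = 0) :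
    ∀ t : ℕ, (x + y) ^ (t + 1) = x ^ (t + 1) + ((t : R) + 1) * (x ^ t * y) := by
  intro t
  induction t with
  | zero => push_cast; ring
  | succ t ih =>
    have h : (x + y) ^ (t + 2) = (x + y) ^ (t + 1) * (x + y) := by ring
    rw [h, ih]
    push_cast
    linear_combination (((t : R) + 1) * x ^ t) * hy

/-- counting lemma -/
lemma sum_mod_blocks {M : Type*} [AddCommMonoid M] {p : ℕ} (hp : 0 < p) (f : ℕ → M) :
    ∀ n : ℕ, ∑ k ∈ (Finset.Ioc 0 (p * n)).filter (fun k => ¬ p ∣ k), f (k % p)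
      = n • ∑ r ∈ Finset.Icc 1 (p - 1), f r := by
  intro n
  induction n with
  | zero => simp
  | succ n ih =>
    have hsplit : Finset.Ioc 0 (p * (n + 1)) = Finset.Ioc 0 (p * n) ∪ Finset.Ioc (p * n) (p * n + p) := by
      rw [Finset.Ioc_union_Ioc_eq_Ioc (Nat.zero_le _) (Nat.le_add_right _ _)]
      ring_nf
    rw [hsplit, Finset.filter_union, Finset.sum_union, ih]
    · have hblock : ∑ k ∈ (Finset.Ioc (p * n) (p * n + p)).filter (fun k => ¬ p ∣ k), f (k % p)
          = ∑ r ∈ Finset.Icc 1 (p - 1), f r := by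
        refine Finset.sum_nbij' (fun k => k - p * n) (fun r => r + p * n) ?_ ?_ ?_ ?_ ?_
        · intro k hk
          simp only [Finset.mem_filter, Finset.mem_Ioc] at hk
          obtain ⟨⟨h1, h2⟩, h3⟩ := hk
          simp only [Finset.mem_Icc]
          constructor
          · omega
          · rcases Nat.lt_or_ge (k - p * n) p with h | h
            · omega
            · exfalso; apply h3
              have : k = p * n + p := by omega
              exact this ▸ ⟨n + 1, by ring⟩
        · intro r hr
          simp only [Finset.mem_Icc] at hr
          simp only [Finset.mem_filter, Finset.mem_Ioc]
          refine ⟨⟨by omega, by omega⟩, ?_⟩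
          intro hdvd
          have : p ∣ r := (Nat.dvd_add_right ⟨n, rfl⟩).mp (by rwa [Nat.add_comm] at hdvd)
          have := Nat.le_of_dvd (by omega) this
          omega
        · intro k hk
          simp only [Finset.mem_filter, Finset.mem_Ioc] at hk
          omega
        · intro r hr
          simp only [Finset.mem_Icc] at hr
          omega
        · intro k hk
          simp only [Finset.mem_filter, Finset.mem_Ioc] at hk
          congr 1
          have hkp : k = (k - p * n) + p * n := by omega
          have hlt : k - p * n < p := by
            rcases Nat.lt_or_ge (k - p * n) p with h | h
            · exact h
            · exfalso; apply hk.2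
              have : k = p * n + p := by omega
              exact this ▸ ⟨n + 1, by ring⟩
          conv_lhs => rw [hkp]
          rw [Nat.add_mul_mod_self_left]
          exact Nat.mod_eq_of_lt hlt
      rw [hblock, succ_nsmul]
    · apply Finset.disjoint_filter_filter
      rw [Finset.disjoint_left]
      intro k hk1 hk2
      simp only [Finset.mem_Ioc] at hk1 hk2
      omega

/-- inner character sum over one period is zero -/
lemma inner_sum_zero {p : ℕ} (hp : p.Prime) {t : ℕ} (ht : 0 < t) (hdvd : ¬ (p - 1) ∣ t) :
    ∑ r ∈ Finset.Icc 1 (p - 1), (((r : ZMod p))⁻¹) ^ t = 0 := by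
  haveI : Fact p.Prime := ⟨hp⟩
  have step1 : ∑ r ∈ Finset.Icc 1 (p - 1), (((r : ZMod p))⁻¹) ^ t
      = ∑ x ∈ Finset.univ.erase (0 : ZMod p), (x⁻¹) ^ t := by
    refine Finset.sum_nbij' (fun r => ((r : ZMod p))) (fun x => x.val) ?_ ?_ ?_ ?_ ?_
    · intro r hr
      simp only [Finset.mem_Icc] at hr
      simp only [Finset.mem_erase, Finset.mem_univ, and_true]
      intro h
      have := (ZMod.natCast_eq_zero_iff r p).mp h
      have := Nat.le_of_dvd (by omega) this
      have hp2 := hp.two_le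
      omega
    · intro x hx
      simp only [Finset.mem_erase, Finset.mem_univ, and_true] at hx
      simp only [Finset.mem_Icc]
      have h1 : x.val ≠ 0 := fun h => hx ((ZMod.val_eq_zero x).mp h)
      have h2 : x.val < p := ZMod.val_lt x
      omega
    · intro r hr
      simp only [Finset.mem_Icc] at hr
      have hp2 := hp.two_le
      exact ZMod.val_cast_of_lt (by omega)
    · intro x hx
      exact ZMod.natCast_zmod_val x
    · intro r hr; rfl
  rw [step1]
  have step2 : ∑ x ∈ Finset.univ.erase (0 : ZMod p), (x⁻¹) ^ t
      = ∑ x ∈ Finset.univ.erase (0 : ZMod p), x ^ t := by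
    refine Finset.sum_nbij' (fun x => x⁻¹) (fun x => x⁻¹) ?_ ?_ ?_ ?_ ?_
    · intro x hx
      simp only [Finset.mem_erase, Finset.mem_univ, and_true] at hx ⊢
      exact inv_ne_zero hx
    · intro x hx
      simp only [Finset.mem_erase, Finset.mem_univ, and_true] at hx ⊢
      exact inv_ne_zero hx
    · intro x _; exact inv_inv x
    · intro x _; exact inv_inv x
    · intro x _; rfl
  rw [step2]
  have hmodpos : 0 < t % (p - 1) := by
    rcases Nat.eq_zero_or_pos (t % (p - 1)) with h | h
    · exact absurd (Nat.dvd_iff_mod_eq_zero.mpr h) hdvd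
    · exact h
  have hpow : ∀ x ∈ Finset.univ.erase (0 : ZMod p), x ^ t = x ^ (t % (p - 1)) := by
    intro x hx
    simp only [Finset.mem_erase, Finset.mem_univ, and_true] at hx
    exact pow_eq_pow_mod t (ZMod.pow_card_sub_one_eq_one hx)
  rw [Finset.sum_congr rfl hpow]
  have huniv : ∑ x : ZMod p, x ^ (t % (p - 1)) = 0 := by
    have hcard : t % (p - 1) < Fintype.card (ZMod p) - 1 := by
      rw [ZMod.card]
      exact Nat.mod_lt _ (by have := hp.two_le; omega)
    exact FiniteField.sum_pow_lt_card_sub_one (ZMod p) (t % (p - 1)) hcard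
  have hsplit : ∑ x : ZMod p, x ^ (t % (p - 1))
      = (0 : ZMod p) ^ (t % (p - 1)) + ∑ x ∈ Finset.univ.erase (0 : ZMod p), x ^ (t % (p - 1)) :=
    (Finset.add_sum_erase _ _ (Finset.mem_univ 0)).symm
  rw [huniv, zero_pow hmodpos.ne'] at hsplit
  rw [zero_add] at hsplit
  exact hsplit.symm

/-- Lemma A: the full restricted power sum vanishes in `ZMod p`. -/
lemma sumA_zero {p : ℕ} (hp : p.Prime) (n : ℕ) {t : ℕ} (ht : 0 < t) (hdvd : ¬ (p - 1) ∣ t) :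
    ∑ k ∈ (Finset.Ioc 0 (p * n)).filter (fun k => ¬ p ∣ k), (((k : ZMod p))⁻¹) ^ t = 0 := by
  have heq : ∀ k ∈ (Finset.Ioc 0 (p * n)).filter (fun k => ¬ p ∣ k),
      (((k : ZMod p))⁻¹) ^ t = (fun r : ℕ => (((r : ZMod p))⁻¹) ^ t) (k % p) := by
    intro k _
    simp only [ZMod.natCast_mod]
  rw [Finset.sum_congr rfl heq,
    sum_mod_blocks hp.pos (fun r : ℕ => (((r : ZMod p))⁻¹) ^ t) n,
    inner_sum_zero hp ht hdvd, smul_zero]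

/-- inverse of `μ - a` when `μ² = 0`. -/
lemma zmod_inv_sub {M : ℕ} (a μ : ZMod M) (ha : IsUnit a) (hμ : μ * μ = 0) :
    (μ - a)⁻¹ = -(a⁻¹ + μ * (a⁻¹ * a⁻¹)) := by
  apply ZMod.inv_eq_of_mul_eq_one
  have h1 : a * a⁻¹ = 1 := ZMod.mul_inv_of_unit a ha
  linear_combination (1 + μ * a⁻¹) * h1 - (a⁻¹ * a⁻¹) * hμ

/-- casting `N` into `ZMod M`. -/
lemma N_cast_eq {M : ℕ} (S : Finset ℕ) (s : ℕ) (hU : ∀ k ∈ S, IsUnit ((k : ZMod M))) :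
    ((∑ k ∈ S, (∏ j ∈ S.erase k, j) ^ s : ℕ) : ZMod M)
      = ((∏ k ∈ S, k : ℕ) : ZMod M) ^ s * ∑ k ∈ S, (((k : ZMod M))⁻¹) ^ s := by
  push_cast
  rw [Finset.mul_sum]
  apply Finset.sum_congr rfl
  intro k hk
  have hQ : (∏ j ∈ S, (j : ZMod M)) = (k : ZMod M) * ∏ j ∈ S.erase k, (j : ZMod M) :=
    (Finset.mul_prod_erase S _ hk).symm
  have hinv : (∏ j ∈ S.erase k, (j : ZMod M)) = ((k : ZMod M))⁻¹ * ∏ j ∈ S, (j : ZMod M) := by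
    rw [hQ, ← mul_assoc, ZMod.inv_mul_of_unit _ (hU k hk), one_mul]
  rw [hinv, mul_pow]
  ring

lemma mhsStar_single (p s m : ℕ) :
    mhsStar p [s] m = ∑ k ∈ (Finset.Ioc 0 m).filter (fun k => ¬ p ∣ k), 1 / (k : ℚ) ^ s := by
  classical
  have h0 : mhsStar p [s] m = ∑ k ∈ Finset.univ.filter
      (fun k : Fin 1 → Fin (m + 1) =>
        StrictMono k ∧ ∀ i, 1 ≤ (k i : ℕ) ∧ ¬ p ∣ (k i : ℕ)),
    ∏ i, 1 / (((k i : ℕ) : ℚ) ^ [s].get i) := rfl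
  rw [h0, Finset.sum_filter]
  have key : (∑ a : Fin 1 → Fin (m + 1),
        if StrictMono a ∧ ∀ i, 1 ≤ (a i : ℕ) ∧ ¬ p ∣ (a i : ℕ) then
          ∏ i, 1 / (((a i : ℕ) : ℚ) ^ [s].get i) else 0)
      = ∑ x : Fin (m + 1),
          (fun k : ℕ => if 0 < k ∧ ¬ p ∣ k then 1 / (k : ℚ) ^ s else 0) (x : ℕ) := by
    apply Fintype.sum_equiv (Equiv.funUnique (Fin 1) (Fin (m + 1)))
    intro a
    have hmono : StrictMono a := by
      intro i j hij
      exact absurd (Subsingleton.elim i j) hij.ne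
    have hall : (∀ i : Fin 1, 1 ≤ (a i : ℕ) ∧ ¬ p ∣ (a i : ℕ)) ↔
        (1 ≤ (a 0 : ℕ) ∧ ¬ p ∣ (a 0 : ℕ)) := by
      constructor
      · intro h; exact h 0
      · intro h i; rwa [Subsingleton.elim i 0]
    have hprod : (∏ i, 1 / (((a i : ℕ) : ℚ) ^ [s].get i)) = 1 / ((a 0 : ℕ) : ℚ) ^ s := by
      rw [Fin.prod_univ_one]
      rfl
    simp only [hmono, true_and, hall, hprod]
    rfl
  rw [key, Fin.sum_univ_eq_sum_range
    (fun k : ℕ => if 0 < k ∧ ¬ p ∣ k then 1 / (k : ℚ) ^ s else 0) (m + 1)]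
  rw [← Finset.sum_filter]
  apply Finset.sum_congr
  · ext k
    simp only [Finset.mem_filter, Finset.mem_range, Finset.mem_Ioc, Nat.lt_succ_iff]
    tauto
  · intros; rfl


/-- If `p` is an odd prime and `p-1` divides neither `s` nor `s+1`, then
`v_p(H*(s; pn)) ≥ 1` if `s` is even and `≥ 2` if `s` is odd (with `v_p(0) = ∞`). -/
theorem stmt6 (p s : ℕ) (hp : p.Prime) (hodd : Odd p) (hs : 0 < s)
    (h1 : ¬ (p - 1) ∣ s) (h2 : ¬ (p - 1) ∣ (s + 1)) (n : ℕ) (hn : 0 < n) :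
    (Even s →
      (mhsStar p [s] (p * n) = 0 ∨ 1 ≤ padicValRat p (mhsStar p [s] (p * n)))) ∧
    (Odd s →
      (mhsStar p [s] (p * n) = 0 ∨ 2 ≤ padicValRat p (mhsStar p [s] (p * n)))) := by
  haveI : Fact p.Prime := ⟨hp⟩
  set m := p * n with hm
  set S := (Finset.Ioc 0 m).filter (fun k => ¬ p ∣ k) with hSdef
  have hSk : ∀ k ∈ S, 0 < k ∧ k ≤ m ∧ ¬ p ∣ k := by
    intro k hk
    simp only [hSdef, Finset.mem_filter, Finset.mem_Ioc] at hk
    tauto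
  set Q := ∏ k ∈ S, k with hQdef
  set N := ∑ k ∈ S, (∏ j ∈ S.erase k, j) ^ s with hNdef
  have hQpos : 0 < Q := Finset.prod_pos fun k hk => (hSk k hk).1
  have hpQ : ¬ p ∣ Q := by
    intro h
    obtain ⟨k, hk, hdvd⟩ := (hp.prime.dvd_finset_prod_iff _).mp h
    exact (hSk k hk).2.2 hdvd
  -- value of the harmonic sum
  have hQQ : (Q : ℚ) ≠ 0 := Nat.cast_ne_zero.mpr hQpos.ne'
  have hQs : ((Q : ℚ)) ^ s ≠ 0 := pow_ne_zero _ hQQ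
  have hH : mhsStar p [s] m = (N : ℚ) / (Q : ℚ) ^ s := by
    rw [mhsStar_single, eq_div_iff hQs, Finset.sum_mul]
    rw [hNdef]
    push_cast
    apply Finset.sum_congr rfl
    intro k hk
    have hk0 : ((k : ℚ)) ≠ 0 := Nat.cast_ne_zero.mpr (hSk k hk).1.ne'
    have hQk : (Q : ℚ) = (k : ℚ) * ∏ j ∈ S.erase k, (j : ℚ) := by
      rw [hQdef]
      push_cast
      exact (Finset.mul_prod_erase S _ hk).symm
    rw [hQk, mul_pow, one_div, inv_mul_cancel_left₀ (pow_ne_zero _ hk0)]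
  -- units
  have hcop : ∀ k ∈ S, Nat.Coprime k p := fun k hk =>
    (Nat.coprime_comm.mp ((Nat.Prime.coprime_iff_not_dvd hp).mpr (hSk k hk).2.2))
  -- EVEN CASE: p ∣ N
  have hNeven : ¬ (p - 1) ∣ s → p ∣ N := by
    intro hd
    rw [← ZMod.natCast_eq_zero_iff]
    have hU : ∀ k ∈ S, IsUnit ((k : ZMod p)) := fun k hk =>
      (ZMod.isUnit_iff_coprime k p).mpr (hcop k hk)
    rw [hNdef, N_cast_eq S s hU, hSdef, hm, sumA_zero hp n hs hd, mul_zero]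
  -- ODD CASE: p^2 ∣ N
  have hNodd : Odd s → p ^ 2 ∣ N := by
    intro hso
    haveI : NeZero (p ^ 2) := ⟨pow_ne_zero 2 hp.pos.ne'⟩
    rw [← ZMod.natCast_eq_zero_iff]
    have hU : ∀ k ∈ S, IsUnit ((k : ZMod (p ^ 2))) := fun k hk =>
      (ZMod.isUnit_iff_coprime k (p ^ 2)).mpr ((hcop k hk).pow_right 2)
    obtain ⟨t, rfl⟩ : ∃ t, s = t + 1 := ⟨s - 1, by omega⟩
    rw [hNdef, N_cast_eq S (t + 1) hU]
    set T := ∑ k ∈ S, (((k : ZMod (p ^ 2)))⁻¹) ^ (t + 1) with hTdef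
    set G := ∑ k ∈ S, (((k : ZMod (p ^ 2)))⁻¹) ^ (t + 2) with hGdef
    have hmsq : ((m : ZMod (p ^ 2))) * ((m : ZMod (p ^ 2))) = 0 := by
      rw [← Nat.cast_mul, ZMod.natCast_eq_zero_iff, hm]
      exact ⟨n * n, by ring⟩
    have hrefl : ∀ k ∈ S, m - k ∈ S := by
      intro k hk
      obtain ⟨hk1, hk2, hk3⟩ := hSk k hk
      have hkm : k < m := by
        rcases Nat.lt_or_ge k m with h | h
        · exact h
        · exfalso
          have : k = m := by omega
          exact hk3 (this ▸ ⟨n, hm⟩)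
      simp only [hSdef, Finset.mem_filter, Finset.mem_Ioc]
      refine ⟨⟨by omega, by omega⟩, ?_⟩
      intro hdvd
      have hdm : p ∣ m := ⟨n, hm⟩
      have : p ∣ k := by
        have := Nat.dvd_sub hdm hdvd
        rwa [Nat.sub_sub_self hk2] at this
      exact hk3 this
    have hTT : T = ∑ k ∈ S, ((((m - k : ℕ) : ZMod (p ^ 2)))⁻¹) ^ (t + 1) := by
      rw [hTdef]
      refine Finset.sum_nbij' (fun k => m - k) (fun k => m - k) ?_ ?_ ?_ ?_ ?_
      · exact hrefl
      · exact hrefl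
      · intro k hk; have := (hSk k hk).2.1; omega
      · intro k hk; have := (hSk k hk).2.1; omega
      · intro k hk
        have h1 := (hSk k hk).2.1
        rw [Nat.sub_sub_self h1]
    have hpoint : ∀ k ∈ S,
        (((k : ZMod (p ^ 2)))⁻¹) ^ (t + 1) + ((((m - k : ℕ) : ZMod (p ^ 2)))⁻¹) ^ (t + 1)
        = (-(((t : ZMod (p ^ 2))) + 1) * (m : ZMod (p ^ 2))) * (((k : ZMod (p ^ 2)))⁻¹) ^ (t + 2) := by
      intro k hk
      set a := ((k : ZMod (p ^ 2))) with hadef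
      have ha : IsUnit a := hU k hk
      have hcast : (((m - k : ℕ) : ZMod (p ^ 2))) = (m : ZMod (p ^ 2)) - a := by
        rw [Nat.cast_sub (hSk k hk).2.1]
      rw [hcast, zmod_inv_sub a _ ha hmsq]
      have hy : ((m : ZMod (p ^ 2)) * (a⁻¹ * a⁻¹)) * ((m : ZMod (p ^ 2)) * (a⁻¹ * a⁻¹)) = 0 := by
        linear_combination (a⁻¹ * a⁻¹ * (a⁻¹ * a⁻¹)) * hmsq
      have hbin := sqZero_add_pow (a⁻¹) ((m : ZMod (p ^ 2)) * (a⁻¹ * a⁻¹)) hy t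
      have hneg : (-(a⁻¹ + (m : ZMod (p ^ 2)) * (a⁻¹ * a⁻¹))) ^ (t + 1)
          = -((a⁻¹ + (m : ZMod (p ^ 2)) * (a⁻¹ * a⁻¹)) ^ (t + 1)) := hso.neg_pow _
      rw [hneg, hbin]
      ring
    have h2T : T + T = (-(((t : ZMod (p ^ 2))) + 1) * (m : ZMod (p ^ 2))) * G := by
      nth_rewrite 2 [hTT]
      rw [← Finset.sum_add_distrib, Finset.sum_congr rfl hpoint, hGdef, ← Finset.mul_sum]
    have hpG : (p : ZMod (p ^ 2)) * G = 0 := by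
      have hdvdpp : p ∣ p ^ 2 := dvd_pow_self p (by norm_num)
      set π : ZMod (p ^ 2) →+* ZMod p := ZMod.castHom hdvdpp (ZMod p) with hπ
      have hπG : π G = ∑ k ∈ S, (((k : ZMod p))⁻¹) ^ (t + 2) := by
        rw [hGdef, map_sum]
        apply Finset.sum_congr rfl
        intro k hk
        rw [map_pow]
        congr 1
        have hmu : (k : ZMod (p ^ 2)) * ((k : ZMod (p ^ 2)))⁻¹ = 1 :=
          ZMod.mul_inv_of_unit _ (hU k hk)
        have h3 : (k : ZMod p) * π (((k : ZMod (p ^ 2)))⁻¹) = 1 := by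
          have := congrArg π hmu
          rwa [map_mul, map_natCast, map_one] at this
        exact (ZMod.inv_eq_of_mul_eq_one p _ _ h3).symm
      have hπG0 : π G = 0 := by
        rw [hπG, hSdef, hm]
        exact sumA_zero hp n (by omega) h2
      have hval0 : ((G.val : ℕ) : ZMod p) = 0 := by
        rw [ZMod.natCast_val, ← ZMod.castHom_apply (h := hdvdpp)]
        exact hπG0
      obtain ⟨c, hc⟩ := (ZMod.natCast_eq_zero_iff _ p).mp hval0
      calc (p : ZMod (p ^ 2)) * G
          = (p : ZMod (p ^ 2)) * ((G.val : ℕ) : ZMod (p ^ 2)) := by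
            rw [ZMod.natCast_zmod_val]
        _ = ((p * G.val : ℕ) : ZMod (p ^ 2)) := by push_cast; ring
        _ = ((p ^ 2 * c : ℕ) : ZMod (p ^ 2)) := by rw [hc]; ring_nf
        _ = ((p ^ 2 : ℕ) : ZMod (p ^ 2)) * ((c : ℕ) : ZMod (p ^ 2)) := by push_cast; ring
        _ = 0 := by rw [ZMod.natCast_self, zero_mul]
    have hT0 : T = 0 := by
      have hmR : ((m : ℕ) : ZMod (p ^ 2)) = (p : ZMod (p ^ 2)) * (n : ZMod (p ^ 2)) := by
        rw [hm]; push_cast; ring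
      have h2T0 : T + T = 0 := by
        rw [h2T, hmR]
        calc (-(((t : ZMod (p ^ 2))) + 1) * ((p : ZMod (p ^ 2)) * (n : ZMod (p ^ 2)))) * G
            = (-(((t : ZMod (p ^ 2))) + 1) * (n : ZMod (p ^ 2))) * ((p : ZMod (p ^ 2)) * G) := by
              ring
          _ = 0 := by rw [hpG, mul_zero]
      have h2u : IsUnit (2 : ZMod (p ^ 2)) := by
        have h22 : ((2 : ℕ) : ZMod (p ^ 2)) = (2 : ZMod (p ^ 2)) := by norm_num
        rw [← h22]
        exact (ZMod.isUnit_iff_coprime 2 (p ^ 2)).mpr (Nat.coprime_two_left.mpr (hodd.pow))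
      apply h2u.mul_left_cancel
      rw [mul_zero, two_mul]
      exact h2T0
    rw [hT0, mul_zero]
  -- value of padic valuation
  have hQsd : ¬ p ∣ Q ^ s := fun h => hpQ (hp.dvd_of_dvd_pow h)
  have hfinal : ∀ t : ℕ, p ^ t ∣ N → mhsStar p [s] m ≠ 0 →
      (t : ℤ) ≤ padicValRat p (mhsStar p [s] m) := by
    intro t hdvd h0
    have hN0 : N ≠ 0 := by
      intro h
      apply h0
      rw [hH, h]
      simp
    have hval : padicValRat p (mhsStar p [s] m) = padicValNat p N := by
      rw [hH, padicValRat.div (Nat.cast_ne_zero.mpr hN0) hQs]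
      rw [padicValRat.of_nat]
      have hcast : ((Q : ℚ)) ^ s = ((Q ^ s : ℕ) : ℚ) := by push_cast; ring
      rw [hcast, padicValRat.of_nat, padicValNat.eq_zero_of_not_dvd hQsd]
      simp
    have hle : t ≤ padicValNat p N := by
      have := (Nat.Prime.pow_dvd_iff_le_factorization hp hN0).mp hdvd
      rwa [Nat.factorization_def N hp] at this
    rw [hval]
    exact_mod_cast hle
  constructor
  · intro _
    by_cases h0 : mhsStar p [s] m = 0
    · left; exact h0
    · right
      exact hfinal 1 (by simpa using hNeven h1) h0
  · intro hso
    by_cases h0 : mhsStar p [s] m = 0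
    · left; exact h0
    · right
      exact hfinal 2 (hNodd hso) h0
end

section
/- Let s and l be positive integers and let p be an odd prime such that p ≥ l+2 and p-1 divides none of ks and ks+1 for k = 1, …, l. Then for every positive integer n, H*({s}^l; pn) satisfies v_p(H*({s}^l; pn)) ≥ 1 if ls is even, and v_p(H*({s}^l; pn)) ≥ 2 if ls is odd. -/
open Finset

section Newton

variable {ι R : Type*} [CommRing R] (F : Finset ι) (x : ι → R)

theorem Finset.mul_esymm_map_val_eq_sum (j : ℕ) :
    j * (F.val.map x).esymm j = (-1) ^ (j + 1) *
      ∑ a ∈ antidiagonal j with a.1 < j,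
        (-1) ^ a.1 * (F.val.map x).esymm a.1 * ∑ i ∈ F, x i ^ a.2 := by
  have hmap : (univ.val.map fun i : F => x i) = F.val.map x := Multiset.attach_map_val' _ _
  have hpsum (d : ℕ) : ∑ i : F, x i ^ d = ∑ i ∈ F, x i ^ d := F.sum_coe_sort (x · ^ d)
  have h := congrArg (MvPolynomial.aeval (R := ℤ) fun i : F => x i)
    (MvPolynomial.mul_esymm_eq_sum F ℤ j)
  simp only [map_mul, map_sum, map_pow, map_neg, map_one, map_natCast,
    MvPolynomial.aeval_esymm_eq_multiset_esymm, MvPolynomial.psum, MvPolynomial.aeval_X] at h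
  simpa only [hmap, hpsum] using h

variable {F x} {I : Ideal R} {l : ℕ}

theorem esymm_map_val_mem_of_psum_mem (hunit : ∀ j ∈ Icc 1 l, IsUnit (j : R))
    (hpsum : ∀ d ∈ Icc 1 l, ∑ i ∈ F, x i ^ d ∈ I) {j : ℕ} (hj : j ∈ Icc 1 l) :
    (F.val.map x).esymm j ∈ I := by
  rw [← I.unit_mul_mem_iff_mem (hunit j hj), F.mul_esymm_map_val_eq_sum x j]
  refine I.mul_mem_left _ (I.sum_mem fun a ha => I.mul_mem_left _ (hpsum a.2 ?_))
  simp only [mem_filter, HasAntidiagonal.mem_antidiagonal, mem_Icc] at ha hj ⊢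
  omega

theorem esymm_map_val_mem_sq_of_psum_mem (hl : 1 ≤ l) (hunit : ∀ j ∈ Icc 1 l, IsUnit (j : R))
    (hpsum : ∀ d ∈ Icc 1 l, ∑ i ∈ F, x i ^ d ∈ I) (hpsum_l : ∑ i ∈ F, x i ^ l ∈ I ^ 2) :
    (F.val.map x).esymm l ∈ I ^ 2 := by
  rw [← Ideal.unit_mul_mem_iff_mem _ (hunit l (by simp [hl])), F.mul_esymm_map_val_eq_sum x l]
  refine Ideal.mul_mem_left _ _ (Ideal.sum_mem _ fun ⟨i, d⟩ ha => ?_)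
  simp only [mem_filter, HasAntidiagonal.mem_antidiagonal] at ha
  rcases Nat.eq_zero_or_pos i with rfl | hi
  · obtain rfl : d = l := by simpa using ha.1
    simpa using Ideal.mul_mem_left _ _ hpsum_l
  · rw [sq]
    exact Ideal.mul_mem_mul (Ideal.mul_mem_left _ _
      (esymm_map_val_mem_of_psum_mem hunit hpsum (by simp; omega)))
      (hpsum d (by simp; omega))

end Newton

theorem FiniteField.sum_pow_eq_zero_of_not_dvd {K : Type*} [Field K] [Fintype K] {i : ℕ}
    (hi : ¬ (Fintype.card K - 1) ∣ i) : ∑ x : K, x ^ i = 0 := by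
  classical
  have hi0 : i ≠ 0 := by rintro rfl; exact hi (dvd_zero _)
  have hunits : univ.map ⟨((↑) : Kˣ → K), Units.val_injective⟩ = univ.erase 0 := by
    ext x
    simpa using ⟨fun ⟨u, hu⟩ => hu ▸ u.ne_zero, fun hx => ⟨Units.mk0 x hx, rfl⟩⟩
  rw [← sum_erase _ (zero_pow hi0), ← hunits, sum_map]
  simpa [hi] using FiniteField.sum_pow_units K i

theorem ZMod.sum_range_natCast {M : Type*} [AddCommMonoid M] (n : ℕ) [NeZero n]
    (f : ZMod n → M) : ∑ r ∈ range n, f r = ∑ x, f x :=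
  sum_nbij' (↑) ZMod.val (by simp) (by simp [ZMod.val_lt])
    (fun r hr => ZMod.val_cast_of_lt (mem_range.1 hr)) (fun x _ => ZMod.natCast_zmod_val x)
    (fun _ _ => rfl)

theorem ZMod.sum_Ico_inv_pow_eq_zero {p t : ℕ} [Fact p.Prime] (ht : ¬ (p - 1) ∣ t) :
    ∑ r ∈ Ico 1 p, (r : ZMod p)⁻¹ ^ t = 0 := by
  have ht0 : t ≠ 0 := by rintro rfl; exact ht (dvd_zero _)
  calc ∑ r ∈ Ico 1 p, (r : ZMod p)⁻¹ ^ t = ∑ r ∈ range p, (r : ZMod p)⁻¹ ^ t := by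
        rw [range_eq_Ico, sum_eq_sum_Ico_succ_bot (Fact.out : p.Prime).pos]
        simp [ht0]
    _ = ∑ x : ZMod p, x⁻¹ ^ t := ZMod.sum_range_natCast p (·⁻¹ ^ t)
    _ = ∑ x : ZMod p, x ^ t := Equiv.sum_comp (Equiv.inv _) (· ^ t)
    _ = 0 := FiniteField.sum_pow_eq_zero_of_not_dvd (by rwa [ZMod.card])

theorem sum_range_mul_filter_not_dvd {M : Type*} [AddCommMonoid M] {p : ℕ} (hp : 0 < p)
    (n : ℕ) (f : ℕ → M) :
    ∑ k ∈ range (p * n) with ¬ p ∣ k, f k = ∑ c ∈ range n, ∑ r ∈ Ico 1 p, f (p * c + r) := by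
  induction n with
  | zero => simp
  | succ n ih =>
    rw [sum_range_succ, ← ih, sum_filter, sum_filter, Nat.mul_succ, sum_range_add]
    congr 1
    rw [range_eq_Ico, sum_eq_sum_Ico_succ_bot hp]
    simp only [dvd_mul_right, add_zero, not_true, if_false, zero_add]
    refine sum_congr rfl fun r hr => if_pos ?_
    rw [Nat.dvd_add_right (dvd_mul_right p n)]
    exact Nat.not_dvd_of_pos_of_lt (mem_Ico.1 hr).1 (mem_Ico.1 hr).2

theorem ZMod.sum_filter_not_dvd_inv_pow_eq_zero {p t : ℕ} [Fact p.Prime] (n : ℕ)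
    (ht : ¬ (p - 1) ∣ t) : ∑ k ∈ range (p * n) with ¬ p ∣ k, (k : ZMod p)⁻¹ ^ t = 0 := by
  rw [sum_range_mul_filter_not_dvd (Fact.out : p.Prime).pos]
  refine sum_eq_zero fun c _ => ?_
  simpa using ZMod.sum_Ico_inv_pow_eq_zero ht

theorem ZMod.isUnit_natCast_of_not_dvd {p k : ℕ} (hp : p.Prime) (hk : ¬ p ∣ k) (e : ℕ) :
    IsUnit (k : ZMod (p ^ e)) :=
  (ZMod.isUnit_iff_coprime k _).2 ((hp.coprime_iff_not_dvd.2 hk).symm.pow_right e)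

theorem ZMod.map_inv_of_isUnit {m n : ℕ} (f : ZMod n →+* ZMod m) {a : ZMod n} (ha : IsUnit a) :
    f a⁻¹ = (f a)⁻¹ :=
  (ZMod.inv_eq_of_mul_eq_one _ _ _ (by rw [← map_mul, ZMod.mul_inv_of_unit a ha, map_one])).symm

theorem ZMod.natCast_dvd_of_castHom_eq_zero {m n : ℕ} [NeZero n] (h : m ∣ n) {a : ZMod n}
    (ha : ZMod.castHom h (ZMod m) a = 0) : (m : ZMod n) ∣ a := by
  rw [← ZMod.natCast_zmod_val a, map_natCast, ZMod.natCast_eq_zero_iff] at ha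
  obtain ⟨c, hc⟩ := ha
  exact ⟨c, by rw [← ZMod.natCast_zmod_val a, hc, Nat.cast_mul]⟩

theorem ZMod.inv_add_mul_pow {m : ℕ} {π x : ZMod m} (hπ : π ^ 2 = 0) (hx : IsUnit x)
    (c : ZMod m) (t : ℕ) : (x + c * π)⁻¹ ^ t = x⁻¹ ^ t - t * c * x⁻¹ ^ (t + 1) * π := by
  have hxx : x * x⁻¹ = 1 := ZMod.mul_inv_of_unit x hx
  have hinv : (x + c * π)⁻¹ = x⁻¹ - c * x⁻¹ ^ 2 * π :=
    ZMod.inv_eq_of_mul_eq_one _ _ _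
      (by linear_combination (1 - c * x⁻¹ * π) * hxx - c ^ 2 * x⁻¹ ^ 2 * hπ)
  induction t with
  | zero => simp
  | succ t ih =>
    rw [pow_succ, ih, hinv]
    push_cast
    linear_combination t * c ^ 2 * x⁻¹ ^ (t + 3) * hπ

theorem ZMod.inv_neg_of_isUnit {m : ℕ} {x : ZMod m} (hx : IsUnit x) : (-x)⁻¹ = -x⁻¹ :=
  ZMod.inv_eq_of_mul_eq_one _ _ _ (by rw [neg_mul_neg]; exact ZMod.mul_inv_of_unit x hx)

theorem ZMod.natCast_self_sq_eq_zero (p : ℕ) : (p : ZMod (p ^ 2)) ^ 2 = 0 := by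
  rw [← Nat.cast_pow, ZMod.natCast_self]

section SquareModulus

variable {p : ℕ} [hp : Fact p.Prime]

theorem ZMod.natCast_dvd_sum_inv_pow {F : Finset ℕ} (hF : ∀ k ∈ F, ¬ p ∣ k) {t : ℕ}
    (h : ∑ k ∈ F, (k : ZMod p)⁻¹ ^ t = 0) :
    (p : ZMod (p ^ 2)) ∣ ∑ k ∈ F, (k : ZMod (p ^ 2))⁻¹ ^ t := by
  refine ZMod.natCast_dvd_of_castHom_eq_zero (dvd_pow_self p two_ne_zero) ?_
  rw [map_sum, ← h]
  refine sum_congr rfl fun k hk => ?_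
  rw [map_pow, ZMod.map_inv_of_isUnit _ (ZMod.isUnit_natCast_of_not_dvd hp.out (hF k hk) 2),
    map_natCast]

theorem natCast_mul_sum_Ico_inv_pow_eq_zero {t : ℕ} (ht : ¬ (p - 1) ∣ t) :
    (p : ZMod (p ^ 2)) * ∑ r ∈ Ico 1 p, (r : ZMod (p ^ 2))⁻¹ ^ t = 0 := by
  obtain ⟨y, hy⟩ := ZMod.natCast_dvd_sum_inv_pow
    (fun r hr => Nat.not_dvd_of_pos_of_lt (mem_Ico.1 hr).1 (mem_Ico.1 hr).2)
    (ZMod.sum_Ico_inv_pow_eq_zero ht)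
  rw [hy, ← mul_assoc, ← sq, ZMod.natCast_self_sq_eq_zero, zero_mul]

theorem isUnit_natCast_of_mem_Ico {r : ℕ} (hr : r ∈ Ico 1 p) : IsUnit (r : ZMod (p ^ 2)) :=
  ZMod.isUnit_natCast_of_not_dvd hp.out
    (Nat.not_dvd_of_pos_of_lt (mem_Ico.1 hr).1 (mem_Ico.1 hr).2) 2

theorem sum_Ico_inv_add_mul_pow {t : ℕ} (ht : ¬ (p - 1) ∣ (t + 1)) (c : ZMod (p ^ 2)) :
    ∑ r ∈ Ico 1 p, ((r : ZMod (p ^ 2)) + c * (p : ZMod (p ^ 2)))⁻¹ ^ t =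
      ∑ r ∈ Ico 1 p, (r : ZMod (p ^ 2))⁻¹ ^ t := by
  rw [sum_congr rfl fun r hr => ZMod.inv_add_mul_pow (ZMod.natCast_self_sq_eq_zero p)
    (isUnit_natCast_of_mem_Ico hr) c t, sum_sub_distrib, sub_eq_self, ← sum_mul, ← mul_sum]
  linear_combination (t * c : ZMod (p ^ 2)) * natCast_mul_sum_Ico_inv_pow_eq_zero ht

theorem sum_Ico_inv_pow_eq_zero_of_odd (hodd : Odd p) {t : ℕ} (ht : Odd t)
    (ht1 : ¬ (p - 1) ∣ (t + 1)) : ∑ r ∈ Ico 1 p, (r : ZMod (p ^ 2))⁻¹ ^ t = 0 := by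
  set T := ∑ r ∈ Ico 1 p, (r : ZMod (p ^ 2))⁻¹ ^ t
  have hreflect : ∑ r ∈ Ico 1 p, ((p - r : ℕ) : ZMod (p ^ 2))⁻¹ ^ t = T := by
    rw [sum_Ico_reflect (fun j => (j : ZMod (p ^ 2))⁻¹ ^ t) 1 (Nat.le_succ p),
      Nat.add_sub_cancel_left, Nat.add_sub_cancel]
  have hterm (r : ℕ) (hr : r ∈ Ico 1 p) : ((p - r : ℕ) : ZMod (p ^ 2))⁻¹ ^ t =
      -(r : ZMod (p ^ 2))⁻¹ ^ t - t * (r : ZMod (p ^ 2))⁻¹ ^ (t + 1) * p := by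
    have hu := isUnit_natCast_of_mem_Ico hr
    rw [Nat.cast_sub (mem_Ico.1 hr).2.le, sub_eq_neg_add, ← one_mul (p : ZMod (p ^ 2)),
      ZMod.inv_add_mul_pow (ZMod.natCast_self_sq_eq_zero p) hu.neg, ZMod.inv_neg_of_isUnit hu,
      ht.neg_pow, ht.add_one.neg_pow]
    ring
  rw [sum_congr rfl hterm, sum_sub_distrib, sum_neg_distrib, ← sum_mul, ← mul_sum] at hreflect
  have h2 : (2 : ZMod (p ^ 2)) * T = 0 := by
    linear_combination -hreflect - (t : ZMod (p ^ 2)) * natCast_mul_sum_Ico_inv_pow_eq_zero ht1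
  have hu2 : IsUnit (2 : ZMod (p ^ 2)) := by
    exact_mod_cast (ZMod.isUnit_iff_coprime 2 _).2 ((Nat.coprime_two_left.2 hodd).pow_right 2)
  exact (hu2.mul_right_eq_zero).1 h2

theorem sum_filter_not_dvd_inv_pow_eq_natCast_mul {t : ℕ} (ht : ¬ (p - 1) ∣ (t + 1))
    (n : ℕ) :
    ∑ k ∈ range (p * n) with ¬ p ∣ k, (k : ZMod (p ^ 2))⁻¹ ^ t =
      n * ∑ r ∈ Ico 1 p, (r : ZMod (p ^ 2))⁻¹ ^ t := by
  have hblock (c : ℕ) : ∑ r ∈ Ico 1 p, ((p * c + r : ℕ) : ZMod (p ^ 2))⁻¹ ^ t =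
      ∑ r ∈ Ico 1 p, (r : ZMod (p ^ 2))⁻¹ ^ t := by
    rw [← sum_Ico_inv_add_mul_pow ht c]
    refine sum_congr rfl fun r _ => ?_
    push_cast
    rw [add_comm, mul_comm]
  rw [sum_range_mul_filter_not_dvd hp.out.pos, sum_congr rfl fun c _ => hblock c, sum_const,
    card_range, nsmul_eq_mul]

end SquareModulus

section Vanishing

variable {p s l : ℕ} [hp : Fact p.Prime]

theorem esymm_inv_pow_eq_zero (hl : 1 ≤ l) (hlp : l < p)
    (hdiv : ∀ d ∈ Icc 1 l, ¬ (p - 1) ∣ d * s) (n : ℕ) :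
    ({k ∈ range (p * n) | ¬ p ∣ k}.val.map fun k : ℕ => (k : ZMod p)⁻¹ ^ s).esymm l = 0 := by
  rw [← Ideal.mem_bot]
  refine esymm_map_val_mem_of_psum_mem (l := l) (fun j hj => ?_) (fun d hd => ?_)
    (j := l) (by simp [hl])
  · simp only [mem_Icc] at hj
    exact pow_one p ▸
      ZMod.isUnit_natCast_of_not_dvd hp.out (Nat.not_dvd_of_pos_of_lt hj.1 (by omega)) 1
  · simp_rw [← pow_mul']
    exact Ideal.mem_bot.2 (ZMod.sum_filter_not_dvd_inv_pow_eq_zero n (hdiv d hd))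

theorem esymm_inv_pow_sq_eq_zero (hodd : Odd p) (hl : 1 ≤ l) (hlp : l < p)
    (hdiv : ∀ d ∈ Icc 1 l, ¬ (p - 1) ∣ d * s ∧ ¬ (p - 1) ∣ d * s + 1) (hls : Odd (l * s))
    (n : ℕ) :
    ({k ∈ range (p * n) | ¬ p ∣ k}.val.map fun k : ℕ => (k : ZMod (p ^ 2))⁻¹ ^ s).esymm l =
      0 := by
  have hbot : Ideal.span {(p : ZMod (p ^ 2))} ^ 2 = ⊥ := by
    rw [Ideal.span_singleton_pow, ZMod.natCast_self_sq_eq_zero, Ideal.span_singleton_eq_bot]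
  rw [← Ideal.mem_bot, ← hbot]
  have hll : l ∈ Icc 1 l := by simp [hl]
  refine esymm_map_val_mem_sq_of_psum_mem (I := Ideal.span {(p : ZMod (p ^ 2))}) hl
    (fun j hj => ?_) (fun d hd => ?_) ?_
  · simp only [mem_Icc] at hj
    exact ZMod.isUnit_natCast_of_not_dvd hp.out (Nat.not_dvd_of_pos_of_lt hj.1 (by omega)) 2
  · simp_rw [← pow_mul']
    exact Ideal.mem_span_singleton.2 (ZMod.natCast_dvd_sum_inv_pow
      (fun k hk => (mem_filter.1 hk).2) (ZMod.sum_filter_not_dvd_inv_pow_eq_zero n (hdiv d hd).1))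
  · simp_rw [← pow_mul']
    rw [sum_filter_not_dvd_inv_pow_eq_natCast_mul (hdiv l hll).2 n,
      sum_Ico_inv_pow_eq_zero_of_odd hodd hls (hdiv l hll).2, mul_zero]
    exact zero_mem _

end Vanishing

theorem sum_strictMono_prod_eq_sum_powersetCard {R : Type*} [CommSemiring R] (m L : ℕ)
    (Q : ℕ → Prop) [DecidablePred Q]
    [DecidablePred fun k : Fin L → Fin (m + 1) => StrictMono k ∧ ∀ i, Q (k i)] (f : ℕ → R) :
    ∑ k ∈ univ.filter (fun k : Fin L → Fin (m + 1) => StrictMono k ∧ ∀ i, Q (k i)),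
        ∏ i, f (k i) =
      ∑ B ∈ {x ∈ range (m + 1) | Q x}.powersetCard L, ∏ x ∈ B, f x := by
  have hval {k : Fin L → Fin (m + 1)} (hk : StrictMono k) : StrictMono fun i => (k i : ℕ) :=
    Fin.val_strictMono.comp hk
  refine sum_bij (fun k _ => univ.image fun i => (k i : ℕ)) (fun k hk => ?_)
    (fun k hk k' hk' heq => ?_) (fun B hB => ?_) (fun k hk => ?_)
  · obtain ⟨hmono, hQ⟩ := (mem_filter.1 hk).2
    refine mem_powersetCard.2 ⟨fun x hx => ?_, ?_⟩
    · obtain ⟨i, -, rfl⟩ := mem_image.1 hx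
      exact mem_filter.2 ⟨mem_range.2 (k i).isLt, hQ i⟩
    · rw [card_image_of_injective _ (hval hmono).injective, card_univ, Fintype.card_fin]
  · have hrange := congrArg ((↑) : Finset ℕ → Set ℕ) heq
    simp only [coe_image, coe_univ, Set.image_univ] at hrange
    have := ((hval (mem_filter.1 hk).2.1).range_inj (hval (mem_filter.1 hk').2.1)).1 hrange
    exact funext fun i => Fin.ext (congrFun this i)
  · obtain ⟨hBF, hBcard⟩ := mem_powersetCard.1 hB
    have hmem (i : Fin L) := mem_filter.1 (hBF (B.orderEmbOfFin_mem hBcard i))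
    refine ⟨fun i => ⟨B.orderEmbOfFin hBcard i, mem_range.1 (hmem i).1⟩,
      mem_filter.2 ⟨mem_univ _, fun i j hij => (B.orderEmbOfFin hBcard).strictMono hij,
        fun i => (hmem i).2⟩, ?_⟩
    exact B.image_orderEmbOfFin_univ hBcard
  · rw [prod_image fun i _ j _ hij => (hval (mem_filter.1 hk).2.1).injective hij]

theorem mhsStar_replicate_mul (p s l n : ℕ) :
    mhsStar p (List.replicate l s) (p * n) =
      ({k ∈ range (p * n) | ¬ p ∣ k}.val.map fun k : ℕ => ((k : ℚ) ^ s)⁻¹).esymm l := by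
  have hfilter :
      {k ∈ range (p * n + 1) | 1 ≤ k ∧ ¬ p ∣ k} = {k ∈ range (p * n) | ¬ p ∣ k} := by
    ext k
    simp only [mem_filter, mem_range]
    constructor
    · rintro ⟨hk, -, hpk⟩
      exact ⟨lt_of_le_of_ne (by omega) fun h => hpk (h ▸ dvd_mul_right p n), hpk⟩
    · rintro ⟨hk, hpk⟩
      exact ⟨by omega, Nat.pos_of_ne_zero fun h => hpk (h ▸ dvd_zero p), hpk⟩
  rw [mhsStar, Finset.esymm_map_val, ← hfilter]
  convert sum_strictMono_prod_eq_sum_powersetCard (p * n) (List.replicate l s).length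
    (fun k => 1 ≤ k ∧ ¬ p ∣ k) (fun k : ℕ => ((k : ℚ) ^ s)⁻¹) using 2
  · simp
  · rw [List.length_replicate]

theorem prod_mul_esymm_map_val {ι R : Type*} [CommSemiring R] [DecidableEq ι] {F : Finset ι}
    {u v : ι → R} (huv : ∀ i ∈ F, u i * v i = 1) (l : ℕ) :
    (∏ i ∈ F, u i) * (F.val.map v).esymm l = ∑ A ∈ F.powersetCard l, ∏ i ∈ F \ A, u i := by
  rw [Finset.esymm_map_val, mul_sum]
  refine sum_congr rfl fun A hA => ?_
  have hAF := (mem_powersetCard.1 hA).1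
  rw [← prod_sdiff hAF, mul_assoc, ← prod_mul_distrib,
    prod_congr rfl fun i hi => huv i (hAF hi), prod_const_one, mul_one]

theorem eq_zero_or_le_padicValRat_of_mul_eq {p : ℕ} [Fact p.Prime] {q : ℚ} {D N e : ℕ}
    (hD : ¬ p ∣ D) (hN : p ^ e ∣ N) (h : (D : ℚ) * q = N) :
    q = 0 ∨ (e : ℤ) ≤ padicValRat p q := by
  have hD0 : D ≠ 0 := by rintro rfl; exact hD (dvd_zero p)
  rcases eq_or_ne N 0 with rfl | hN0
  · left
    simpa [hD0] using h
  · right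
    have hq : q = N / D := by rw [eq_div_iff (by exact_mod_cast hD0), mul_comm, h]
    rw [hq, padicValRat.div (by exact_mod_cast hN0) (by exact_mod_cast hD0), padicValRat.of_nat,
      padicValRat.of_nat, padicValNat.eq_zero_of_not_dvd hD, Nat.cast_zero, sub_zero]
    exact_mod_cast (padicValNat_dvd_iff_le hN0).1 hN

theorem eq_zero_or_le_padicValRat_esymm {p : ℕ} [hp : Fact p.Prime] {F : Finset ℕ}
    (hF : ∀ k ∈ F, ¬ p ∣ k) {s l e : ℕ}
    (h : (F.val.map fun k : ℕ => (k : ZMod (p ^ e))⁻¹ ^ s).esymm l = 0) :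
    (F.val.map fun k : ℕ => ((k : ℚ) ^ s)⁻¹).esymm l = 0 ∨
      (e : ℤ) ≤ padicValRat p ((F.val.map fun k : ℕ => ((k : ℚ) ^ s)⁻¹).esymm l) := by
  refine eq_zero_or_le_padicValRat_of_mul_eq (D := ∏ k ∈ F, k ^ s)
    (N := ∑ A ∈ F.powersetCard l, ∏ k ∈ F \ A, k ^ s) ?_ ?_ ?_
  · rw [Prime.dvd_finsetProd_iff hp.out.prime]
    rintro ⟨k, hk, hpk⟩
    exact hF k hk (hp.out.dvd_of_dvd_pow hpk)
  · have huv (k : ℕ) (hk : k ∈ F) : (k : ZMod (p ^ e)) ^ s * (k : ZMod (p ^ e))⁻¹ ^ s = 1 := by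
      rw [← mul_pow, ZMod.mul_inv_of_unit _ (ZMod.isUnit_natCast_of_not_dvd hp.out (hF k hk) e),
        one_pow]
    rw [← ZMod.natCast_eq_zero_iff]
    push_cast
    rw [← prod_mul_esymm_map_val huv l, h, mul_zero]
  · push_cast
    refine prod_mul_esymm_map_val (fun k hk => mul_inv_cancel₀ ?_) l
    exact pow_ne_zero _ (Nat.cast_ne_zero.2 fun h0 => hF k hk (h0 ▸ dvd_zero p))

theorem stmt7_general (s l p : ℕ) (hl : 0 < l) (hp : p.Prime) (hodd : Odd p)
    (hpl : l + 2 ≤ p)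
    (hdiv : ∀ k, 1 ≤ k → k ≤ l → ¬ (p - 1) ∣ (k * s) ∧ ¬ (p - 1) ∣ (k * s + 1))
    (n : ℕ) :
    (Even (l * s) →
      (mhsStar p (List.replicate l s) (p * n) = 0 ∨
        1 ≤ padicValRat p (mhsStar p (List.replicate l s) (p * n)))) ∧
    (Odd (l * s) →
      (mhsStar p (List.replicate l s) (p * n) = 0 ∨
        2 ≤ padicValRat p (mhsStar p (List.replicate l s) (p * n)))) := by
  have := Fact.mk hp
  have hF : ∀ k ∈ {k ∈ range (p * n) | ¬ p ∣ k}, ¬ p ∣ k := fun k hk => (mem_filter.1 hk).2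
  have hdiv' : ∀ d ∈ Icc 1 l, ¬ (p - 1) ∣ d * s ∧ ¬ (p - 1) ∣ d * s + 1 :=
    fun d hd => hdiv d (mem_Icc.1 hd).1 (mem_Icc.1 hd).2
  rw [mhsStar_replicate_mul]
  refine ⟨fun _ => ?_, fun hls => ?_⟩
  · simpa using eq_zero_or_le_padicValRat_esymm hF (e := 1)
      (by rw [pow_one]; exact esymm_inv_pow_eq_zero hl (by omega) (fun d hd => (hdiv' d hd).1) n)
  · simpa using eq_zero_or_le_padicValRat_esymm hF
      (esymm_inv_pow_sq_eq_zero hodd hl (by omega) hdiv' hls n)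

/-- If `p` is an odd prime, `p ≥ l+2` and `p-1` divides none of `ks`, `ks+1` for
`k = 1,…,l`, then for every `n ≥ 1`, `v_p(H*({s}^l; pn)) ≥ 1` if `ls` is even and
`≥ 2` if `ls` is odd (with `v_p(0) = ∞`). -/
theorem stmt7 (s l p : ℕ) (hs : 0 < s) (hl : 0 < l) (hp : p.Prime) (hodd : Odd p)
    (hpl : l + 2 ≤ p)
    (hdiv : ∀ k, 1 ≤ k → k ≤ l → ¬ (p - 1) ∣ (k * s) ∧ ¬ (p - 1) ∣ (k * s + 1))
    (n : ℕ) (hn : 0 < n) :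
    (Even (l * s) →
      (mhsStar p (List.replicate l s) (p * n) = 0 ∨
        1 ≤ padicValRat p (mhsStar p (List.replicate l s) (p * n)))) ∧
    (Odd (l * s) →
      (mhsStar p (List.replicate l s) (p * n) = 0 ∨
        2 ≤ padicValRat p (mhsStar p (List.replicate l s) (p * n)))) :=
  stmt7_general s l p hl hp hodd hpl hdiv n
end

section
/- Let p be an odd prime and s a positive integer such that p-1 divides neither s nor s+1. Let n be a positive integer and write n = p·ñ + r with 0 ≤ r ≤ p-1. Then v_p(H(s;n)) ≥ 1 if and only if both (i) v_p(H(s;ñ)) ≥ s (or H(s;ñ) = 0) and (ii) v_p( H(s;r) + p^{-s}·H(s;ñ) ) ≥ 1. -/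
lemma mhs_single (s n : ℕ) : mhs [s] n = ∑ k ∈ Finset.Icc 1 n, 1/(k:ℚ)^s := by
  classical
  rw [mhs]
  show (∑ k ∈ Finset.univ.filter
      (fun k : Fin 1 → Fin (n + 1) =>
        StrictMono k ∧ ∀ i, 1 ≤ (k i : ℕ)),
    ∏ i : Fin 1, 1 / (((k i : ℕ) : ℚ) ^ s)) = _
  refine Finset.sum_bij (fun k _ => (k 0 : ℕ)) ?_ ?_ ?_ ?_
  · intro k hk
    simp only [Finset.mem_filter, Finset.mem_univ, true_and] at hk
    simp only [Finset.mem_Icc]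
    exact ⟨hk.2 0, Nat.lt_succ_iff.mp (k 0).isLt⟩
  · intro a ha b hb h
    funext i
    have hi : i = 0 := Subsingleton.elim i 0
    rw [hi]
    exact Fin.ext h
  · intro m hm
    simp only [Finset.mem_Icc] at hm
    refine ⟨fun _ => ⟨m, Nat.lt_succ_of_le hm.2⟩, ?_, rfl⟩
    simp only [Finset.mem_filter, Finset.mem_univ, true_and]
    exact ⟨Subsingleton.strictMono _, fun _ => hm.1⟩
  · intro k hk
    simp

lemma Icc_one_eq_Ioc (x : ℕ) : Finset.Icc 1 x = Finset.Ioc 0 x := rfl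

lemma sum_periodic {M : Type*} [AddCommMonoid M] (p : ℕ) (hp : 0 < p) (g : ℕ → M)
    (hg : ∀ k, g (k + p) = g k) (n : ℕ) :
    ∑ k ∈ Finset.Icc 1 n, g k
      = (n / p) • (∑ k ∈ Finset.Icc 1 p, g k) + ∑ k ∈ Finset.Icc 1 (n % p), g k := by
  induction n using Nat.strong_induction_on with
  | _ n ih =>
    by_cases h : n < p
    · rw [Nat.div_eq_of_lt h, Nat.mod_eq_of_lt h, zero_smul, zero_add]
    · push_neg at h
      have e1 : n / p = (n - p) / p + 1 := Nat.div_eq_sub_div hp h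
      have e2 : n % p = (n - p) % p := Nat.mod_eq_sub_mod h
      have split : ∑ k ∈ Finset.Icc 1 n, g k
          = (∑ k ∈ Finset.Icc 1 p, g k) + ∑ k ∈ Finset.Ioc p n, g k := by
        rw [Icc_one_eq_Ioc, Icc_one_eq_Ioc]
        exact (Finset.sum_Ioc_consecutive g (Nat.zero_le p) h).symm
      have shift : ∑ k ∈ Finset.Ioc p n, g k = ∑ k ∈ Finset.Icc 1 (n - p), g k := by
        rw [Icc_one_eq_Ioc]
        refine Finset.sum_nbij' (fun k => k - p) (fun k => k + p) ?_ ?_ ?_ ?_ ?_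
        · intro a ha; simp only [Finset.mem_Ioc] at *; omega
        · intro a ha; simp only [Finset.mem_Ioc] at *; omega
        · intro a ha; simp only [Finset.mem_Ioc] at ha; omega
        · intro a ha; omega
        · intro a ha
          simp only [Finset.mem_Ioc] at ha
          rw [← hg (a - p)]
          congr 1
          omega
      rw [split, shift, ih (n - p) (by omega), e1, e2, add_smul, one_smul]
      abel

lemma padicNorm_pow (p : ℕ) [Fact p.Prime] (m : ℕ) (q : ℚ) :
    padicNorm p (q ^ m) = padicNorm p q ^ m := by
  induction m with
  | zero => simp [padicNorm.one]
  | succ m ih => rw [pow_succ, padicNorm.mul, ih, pow_succ]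

lemma val_iff {p : ℕ} [hp : Fact p.Prime] (m : ℤ) (q : ℚ) :
    (q = 0 ∨ m ≤ padicValRat p q) ↔ padicNorm p q ≤ (p:ℚ)^(-m) := by
  have hp1 : 1 < (p:ℚ) := by exact_mod_cast hp.out.one_lt
  rcases eq_or_ne q 0 with rfl | hq
  · simp only [padicNorm.zero, eq_self_iff_true, true_or, true_iff]
    positivity
  · rw [padicNorm.eq_zpow_of_nonzero hq, zpow_le_zpow_iff_right₀ hp1]
    simp [hq]

open Classical in
lemma sum_split (p s n : ℕ) (hp : 0 < p) :
    ∑ k ∈ Finset.Icc 1 n, 1/(k:ℚ)^s =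
      (∑ k ∈ (Finset.Icc 1 n).filter (fun k => ¬ p ∣ k), 1/(k:ℚ)^s)
        + (1/(p:ℚ)^s) * ∑ j ∈ Finset.Icc 1 (n/p), 1/(j:ℚ)^s := by
  rw [← Finset.sum_filter_add_sum_filter_not (Finset.Icc 1 n) (fun k => p ∣ k), add_comm]
  congr 1
  rw [Finset.mul_sum]
  refine Finset.sum_nbij' (fun k => k / p) (fun j => p * j) ?_ ?_ ?_ ?_ ?_
  · intro a ha
    simp only [Finset.mem_filter, Finset.mem_Icc] at ha ⊢
    obtain ⟨⟨h1, h2⟩, c, rfl⟩ := ha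
    rw [Nat.mul_div_cancel_left _ hp]
    constructor
    · rcases Nat.eq_zero_or_pos c with rfl | hc
      · omega
      · exact hc
    · exact Nat.le_div_iff_mul_le hp |>.mpr (by have := Nat.mul_comm p c; omega)
  · intro a ha
    simp only [Finset.mem_filter, Finset.mem_Icc] at ha ⊢
    have := Nat.le_div_iff_mul_le hp |>.mp ha.2
    refine ⟨⟨Nat.one_le_iff_ne_zero.mpr (Nat.mul_ne_zero (by omega) (by omega)), ?_⟩,
      dvd_mul_right p a⟩
    calc p * a = a * p := Nat.mul_comm _ _
      _ ≤ n := this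
  · intro a ha
    simp only [Finset.mem_filter, Finset.mem_Icc] at ha
    obtain ⟨⟨h1, h2⟩, c, rfl⟩ := ha
    rw [Nat.mul_div_cancel_left _ hp]
  · intro a ha
    rw [Nat.mul_div_cancel_left _ hp]
  · intro a ha
    simp only [Finset.mem_filter, Finset.mem_Icc] at ha
    obtain ⟨⟨h1, h2⟩, c, rfl⟩ := ha
    rw [Nat.mul_div_cancel_left _ hp]
    push_cast
    rw [mul_pow]
    rw [one_div, one_div, one_div, mul_inv]

lemma term_congr (p : ℕ) [hp : Fact p.Prime] (s k m : ℕ) (hk : ¬ p ∣ k) (hm : ¬ p ∣ m)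
    (hkm : k % p = m % p) :
    padicNorm p (1/(k:ℚ)^s - 1/(m:ℚ)^s) ≤ (p:ℚ)⁻¹ := by
  have hk0 : (k:ℚ) ≠ 0 := Nat.cast_ne_zero.mpr (by rintro rfl; exact hk (dvd_zero p))
  have hm0 : (m:ℚ) ≠ 0 := Nat.cast_ne_zero.mpr (by rintro rfl; exact hm (dvd_zero p))
  have key : (1/(k:ℚ)^s - 1/(m:ℚ)^s) = (((m:ℤ)^s - (k:ℤ)^s : ℤ) : ℚ) / ((k:ℚ)^s * (m:ℚ)^s) := by
    push_cast
    field_simp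
  rw [key, padicNorm.div, padicNorm.mul, padicNorm_pow, padicNorm_pow,
    (padicNorm.nat_eq_one_iff k).mpr hk, (padicNorm.nat_eq_one_iff m).mpr hm]
  simp only [one_pow, mul_one, div_one]
  have hdvd : ((p:ℤ)) ∣ ((m:ℤ)^s - (k:ℤ)^s) := by
    have h1 : (k:ℤ) % p = (m:ℤ) % p := by
      have := hkm
      omega
    have h2 : (k:ℤ) ≡ (m:ℤ) [ZMOD p] := h1
    exact (Int.ModEq.pow s h2).dvd
  have := (padicNorm.dvd_iff_norm_le (p := p) (n := 1) (z := ((m:ℤ)^s - (k:ℤ)^s))).mp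
    (by simpa using hdvd)
  simpa using this

open Finset in
lemma block_norm (p : ℕ) [hp : Fact p.Prime] (s : ℕ) (h1 : ¬ (p-1) ∣ s) :
    padicNorm p (∑ a ∈ Finset.Icc 1 (p-1), 1/(a:ℚ)^s) ≤ (p:ℚ)⁻¹ := by
  classical
  set F := (p-1).factorial with hF
  have hpF : ¬ p ∣ F := by
    rw [hp.out.dvd_factorial]
    have := hp.out.two_le
    omega
  have hF0 : (F:ℚ) ≠ 0 := Nat.cast_ne_zero.mpr (Nat.factorial_ne_zero _)
  set M := ∑ a ∈ Finset.Icc 1 (p-1), (F/a)^s with hM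
  have heq : ∑ a ∈ Finset.Icc 1 (p-1), 1/(a:ℚ)^s = (M:ℚ) / (F:ℚ)^s := by
    rw [hM]
    push_cast
    rw [Finset.sum_div]
    refine Finset.sum_congr rfl ?_
    intro a ha
    simp only [Finset.mem_Icc] at ha
    have hdvd : a ∣ F := Nat.dvd_factorial (by omega) ha.2
    have ha0 : (a:ℚ) ≠ 0 := Nat.cast_ne_zero.mpr (by omega)
    rw [Nat.cast_div hdvd ha0, div_pow, div_div, mul_comm, ← div_div,
      div_self (pow_ne_zero s hF0), one_div]
  have hpM : p ∣ M := by
    rw [← ZMod.natCast_eq_zero_iff]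
    have hcast : (M : ZMod p) = ∑ a ∈ Finset.Icc 1 (p-1), ((F/a : ℕ) : ZMod p)^s := by
      rw [hM]; push_cast; rfl
    have hterm : ∀ a ∈ Finset.Icc 1 (p-1),
        ((F/a : ℕ) : ZMod p)^s = (F : ZMod p)^s * (((a : ZMod p))⁻¹)^s := by
      intro a ha
      simp only [Finset.mem_Icc] at ha
      have hdvd : a ∣ F := Nat.dvd_factorial (by omega) ha.2
      have hpa : ¬ p ∣ a := by
        intro hd
        have := Nat.le_of_dvd (by omega) hd
        omega
      have ha0 : (a : ZMod p) ≠ 0 := by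
        rw [Ne, ZMod.natCast_eq_zero_iff]; exact hpa
      have hmul : ((F/a : ℕ) : ZMod p) * (a : ZMod p) = (F : ZMod p) := by
        rw [← Nat.cast_mul, Nat.div_mul_cancel hdvd]
      have : ((F/a : ℕ) : ZMod p) = (F : ZMod p) * ((a : ZMod p))⁻¹ :=
        (eq_mul_inv_iff_mul_eq₀ ha0).mpr hmul
      rw [this, mul_pow]
    rw [hcast, Finset.sum_congr rfl hterm, ← Finset.mul_sum]
    have hzero : ∑ a ∈ Finset.Icc 1 (p-1), (((a : ZMod p))⁻¹)^s = 0 := by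
      have hbij : ∑ a ∈ Finset.Icc 1 (p-1), (((a : ZMod p))⁻¹)^s
          = ∑ u : (ZMod p)ˣ, (((u : ZMod p))⁻¹)^s := by
        symm
        refine Finset.sum_bij (fun u _ => (u : ZMod p).val) ?_ ?_ ?_ ?_
        · intro u _
          simp only [Finset.mem_Icc]
          have h0 : (u : ZMod p) ≠ 0 := Units.ne_zero u
          have hv0 : (u : ZMod p).val ≠ 0 := by
            rw [Ne, ZMod.val_eq_zero]; exact h0
          have hvlt : (u : ZMod p).val < p := ZMod.val_lt _
          omega
        · intro u _ v _ h
          have : (u : ZMod p) = (v : ZMod p) := by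
            rw [← ZMod.natCast_zmod_val (u : ZMod p), ← ZMod.natCast_zmod_val (v : ZMod p), h]
          exact Units.ext this
        · intro a ha
          simp only [Finset.mem_Icc] at ha
          have hpa : ¬ p ∣ a := fun hd => by
            have := Nat.le_of_dvd (by omega) hd; omega
          have hcop : Nat.Coprime a p := (Nat.coprime_comm.mp (hp.out.coprime_iff_not_dvd.mpr hpa))
          refine ⟨ZMod.unitOfCoprime a hcop, Finset.mem_univ _, ?_⟩
          have hcoe : ((ZMod.unitOfCoprime a hcop : (ZMod p)ˣ) : ZMod p) = (a : ZMod p) :=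
            ZMod.coe_unitOfCoprime a hcop
          rw [hcoe, ZMod.val_natCast_of_lt (by have := hp.out.two_le; omega)]
        · intro u _
          congr 1
          rw [ZMod.natCast_zmod_val]
      rw [hbij]
      have hinv : ∑ u : (ZMod p)ˣ, (((u : ZMod p))⁻¹)^s = ∑ u : (ZMod p)ˣ, ((u : ZMod p))^s := by
        refine Fintype.sum_equiv (Equiv.inv (ZMod p)ˣ) _ _ ?_
        intro u
        simp only [Equiv.inv_apply]
        rw [← Units.val_inv_eq_inv_val]
      rw [hinv]
      have := FiniteField.sum_pow_units (ZMod p) s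
      rw [ZMod.card p] at this
      rw [this, if_neg h1]
    rw [hzero, mul_zero]
  rw [heq, padicNorm.div, padicNorm_pow, (padicNorm.nat_eq_one_iff F).mpr hpF, one_pow, div_one]
  have := (padicNorm.dvd_iff_norm_le (p := p) (n := 1) (z := (M:ℤ))).mp
    (by simpa using Int.natCast_dvd_natCast.mpr hpM)
  simpa using this

/-- Writing `n = p·ñ + r` with `ñ = ⌊n/p⌋` and `r = n mod p`:
`v_p(H(s;n)) ≥ 1` iff both `v_p(H(s;ñ)) ≥ s` (or `H(s;ñ) = 0`) and
`v_p(H(s;r) + p^{-s}·H(s;ñ)) ≥ 1` (with `v_p(0) = ∞`). -/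
theorem stmt9 (p s : ℕ) (hp : p.Prime) (hodd : Odd p) (hs : 0 < s)
    (h1 : ¬ (p - 1) ∣ s) (h2 : ¬ (p - 1) ∣ (s + 1)) (n : ℕ) (hn : 0 < n) :
    (mhs [s] n = 0 ∨ 1 ≤ padicValRat p (mhs [s] n)) ↔
      ((mhs [s] (n / p) = 0 ∨ (s : ℤ) ≤ padicValRat p (mhs [s] (n / p))) ∧
        (mhs [s] (n % p) + (1 / (p : ℚ) ^ s) * mhs [s] (n / p) = 0 ∨
          1 ≤ padicValRat p
            (mhs [s] (n % p) + (1 / (p : ℚ) ^ s) * mhs [s] (n / p)))) := by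
  classical
  haveI : Fact p.Prime := ⟨hp⟩
  have hp0 : 0 < p := hp.pos
  have hp1 : 1 < p := hp.one_lt
  have hpq : (1:ℚ) < p := by exact_mod_cast hp1
  have hpq0 : (0:ℚ) < p := by positivity
  rw [mhs_single s n, mhs_single s (n/p), mhs_single s (n%p)]
  rw [val_iff, val_iff, val_iff]
  set Hn := ∑ k ∈ Finset.Icc 1 n, 1/(k:ℚ)^s with hHn
  set Hq := ∑ k ∈ Finset.Icc 1 (n/p), 1/(k:ℚ)^s with hHq
  set Hr := ∑ k ∈ Finset.Icc 1 (n%p), 1/(k:ℚ)^s with hHr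
  set A := ∑ k ∈ (Finset.Icc 1 n).filter (fun k => ¬ p ∣ k), 1/(k:ℚ)^s with hA
  set c := 1/(p:ℚ)^s with hc
  have hsplit : Hn = A + c * Hq := sum_split p s n hp0
  have hrmod : n % p < p := Nat.mod_lt n hp0
  -- the periodic function
  set g : ℕ → ℚ := fun k => 1/(((k % p : ℕ)):ℚ)^s with hg
  have hgper : ∀ k, g (k + p) = g k := by
    intro k; simp only [hg, Nat.add_mod_right]
  have hgzero : ∀ k, p ∣ k → g k = 0 := by
    intro k hk
    simp only [hg, Nat.mod_eq_zero_of_dvd hk]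
    simp [zero_pow hs.ne']
  have hgid : ∀ k, k < p → g k = 1/(k:ℚ)^s := by
    intro k hk; simp only [hg, Nat.mod_eq_of_lt hk]
  -- key congruence: padicNorm p (A - Hr) ≤ p⁻¹
  have hD : padicNorm p (A - Hr) ≤ (p:ℚ)⁻¹ := by
    have step1 : A = (∑ k ∈ (Finset.Icc 1 n).filter (fun k => ¬ p ∣ k), (1/(k:ℚ)^s - g k))
        + ∑ k ∈ (Finset.Icc 1 n).filter (fun k => ¬ p ∣ k), g k := by
      rw [← Finset.sum_add_distrib]
      refine Finset.sum_congr rfl ?_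
      intro k _; ring
    have step2 : ∑ k ∈ (Finset.Icc 1 n).filter (fun k => ¬ p ∣ k), g k
        = ∑ k ∈ Finset.Icc 1 n, g k := by
      rw [← Finset.sum_filter_add_sum_filter_not (Finset.Icc 1 n) (fun k => ¬ p ∣ k) g]
      have : ∑ k ∈ (Finset.Icc 1 n).filter (fun k => ¬¬ p ∣ k), g k = 0 := by
        refine Finset.sum_eq_zero ?_
        intro k hk
        simp only [Finset.mem_filter, not_not] at hk
        exact hgzero k hk.2
      rw [this, add_zero]
    have step3 : ∑ k ∈ Finset.Icc 1 n, g k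
        = (n / p) • (∑ k ∈ Finset.Icc 1 p, g k) + ∑ k ∈ Finset.Icc 1 (n % p), g k :=
      sum_periodic p hp0 g hgper n
    have step4 : ∑ k ∈ Finset.Icc 1 (n % p), g k = Hr := by
      refine Finset.sum_congr rfl ?_
      intro k hk
      simp only [Finset.mem_Icc] at hk
      exact hgid k (by omega)
    have step5 : ∑ k ∈ Finset.Icc 1 p, g k = ∑ a ∈ Finset.Icc 1 (p-1), 1/(a:ℚ)^s := by
      have htop := Finset.sum_Icc_succ_top (a := 1) (b := p - 1) (by omega) g
      rw [show p - 1 + 1 = p by omega] at htop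
      rw [htop, hgzero p dvd_rfl, add_zero]
      refine Finset.sum_congr rfl ?_
      intro k hk
      simp only [Finset.mem_Icc] at hk
      exact hgid k (by omega)
    have hAHr : A - Hr = (∑ k ∈ (Finset.Icc 1 n).filter (fun k => ¬ p ∣ k), (1/(k:ℚ)^s - g k))
        + (n / p) • (∑ a ∈ Finset.Icc 1 (p-1), 1/(a:ℚ)^s) := by
      rw [step1, step2, step3, step4, step5]
      ring_nf
    rw [hAHr]
    have hb1 : padicNorm p (∑ k ∈ (Finset.Icc 1 n).filter (fun k => ¬ p ∣ k),
        (1/(k:ℚ)^s - g k)) ≤ (p:ℚ)⁻¹ := by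
      refine padicNorm.sum_le' ?_ (by positivity)
      intro k hk
      simp only [Finset.mem_filter, Finset.mem_Icc] at hk
      have hpk : ¬ p ∣ k := hk.2
      have hkp0 : k % p ≠ 0 := fun h => hpk (Nat.dvd_of_mod_eq_zero h)
      have hpkm : ¬ p ∣ (k % p) := by
        intro hd
        have := Nat.le_of_dvd (by omega) hd
        have := Nat.mod_lt k hp0
        omega
      have hc2 := term_congr p s k (k % p) hpk hpkm
        ((Nat.mod_mod_of_dvd k dvd_rfl).symm)
      have hgk : g k = 1/((k % p : ℕ):ℚ)^s := rfl
      rw [hgk]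
      exact hc2
    have hb2 : padicNorm p ((n / p) • (∑ a ∈ Finset.Icc 1 (p-1), 1/(a:ℚ)^s)) ≤ (p:ℚ)⁻¹ := by
      rw [nsmul_eq_mul, padicNorm.mul]
      calc padicNorm p ((n/p : ℕ):ℚ) * padicNorm p (∑ a ∈ Finset.Icc 1 (p-1), 1/(a:ℚ)^s)
          ≤ 1 * (p:ℚ)⁻¹ := by
            refine mul_le_mul (padicNorm.of_nat _) (block_norm p s h1) (padicNorm.nonneg _)
              (by norm_num)
        _ = (p:ℚ)⁻¹ := one_mul _
    exact le_trans padicNorm.nonarchimedean (max_le hb1 hb2)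
  have hCr : padicNorm p Hr ≤ 1 := by
    refine padicNorm.sum_le' ?_ (by norm_num)
    intro k hk
    simp only [Finset.mem_Icc] at hk
    have hpk : ¬ p ∣ k := by
      intro hd
      have := Nat.le_of_dvd (by omega) hd
      omega
    rw [padicNorm.div, padicNorm.one, padicNorm_pow, (padicNorm.nat_eq_one_iff k).mpr hpk,
      one_pow, div_one]
  have hcnorm : padicNorm p c = (p:ℚ)^s := by
    rw [hc, padicNorm.div, padicNorm.one, padicNorm_pow, padicNorm.padicNorm_p hp1]
    rw [one_div, inv_pow, inv_inv]
  have hneg1 : ((p:ℚ))^(-(1:ℤ)) = (p:ℚ)⁻¹ := by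
    rw [zpow_neg, zpow_one]
  have hnegs : ((p:ℚ))^(-(s:ℤ)) = ((p:ℚ)^s)⁻¹ := by
    rw [zpow_neg, zpow_natCast]
  set u := Hr + c * Hq with hu
  have huHn : Hn = u + (A - Hr) := by rw [hsplit, hu]; ring
  rw [hneg1, hnegs]
  constructor
  · intro h
    have hu1 : padicNorm p u ≤ (p:ℚ)⁻¹ := by
      have : u = Hn - (A - Hr) := by rw [huHn]; ring
      rw [this]
      exact le_trans padicNorm.sub (max_le h hD)
    refine ⟨?_, hu1⟩
    have hcq : padicNorm p (c * Hq) ≤ 1 := by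
      have : c * Hq = u - Hr := by rw [hu]; ring
      rw [this]
      refine le_trans padicNorm.sub (max_le (le_trans hu1 ?_) hCr)
      rw [inv_le_one_iff₀]
      right; exact le_of_lt hpq
    rw [padicNorm.mul, hcnorm] at hcq
    rw [← one_div, le_div_iff₀ (by positivity : (0:ℚ) < (p:ℚ)^s)]
    calc padicNorm p Hq * (p:ℚ)^s = (p:ℚ)^s * padicNorm p Hq := mul_comm _ _
      _ ≤ 1 := hcq
  · rintro ⟨-, hu1⟩
    rw [huHn]
    exact le_trans padicNorm.nonarchimedean (max_le hu1 hD)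
end

section
/- Let s be a positive integer. For every positive integer n, if t ≥ 1 is the integer with 2^{t-1} ≤ n < 2^t, then v_2(H(s;n)) = -(t-1)s. In particular, the numerator of H(s;n) in lowest terms is odd for every n ≥ 1, so J(s|2) = {0}. -/
/-!
Among `1, …, n` with `2^(t-1) ≤ n < 2^t`, the power of two `2^(t-1)` is the only index of
2-adic valuation `t - 1`; all the others have smaller valuation. Hence `1/(2^(t-1))^s` is the
unique term of `H(s;n)` of least 2-adic valuation, which forces `v₂(H(s;n)) = -(t-1)s`. A
nonzero rational of nonpositive 2-adic valuation has an odd numerator.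
-/

open Finset

lemma mhs_singleton (s n : ℕ) : mhs [s] n = ∑ k ∈ Icc 1 n, ((k : ℚ) ^ s)⁻¹ := by
  have eq_zero (i : Fin [s].length) : i = 0 := Fin.ext (Nat.lt_one_iff.mp i.isLt)
  unfold mhs
  refine sum_nbij' (fun k => (k 0 : ℕ)) (fun k _ => ⟨min k n, by omega⟩) ?_ ?_ ?_ ?_ ?_
  · intro k hk
    obtain ⟨-, -, hk⟩ := mem_filter.mp hk
    exact mem_Icc.mpr ⟨hk 0, Fin.is_le _⟩
  · intro k hk
    obtain ⟨hk1, hkn⟩ := mem_Icc.mp hk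
    refine mem_filter.mpr ⟨mem_univ _, fun i j hij => ?_, fun _ => by simpa [hkn] using hk1⟩
    rw [eq_zero i, eq_zero j] at hij
    exact absurd hij (lt_irrefl 0)
  · intro k _
    funext i
    rw [eq_zero i]
    ext
    simpa using Fin.is_le _
  · intro k hk
    simp [(mem_Icc.mp hk).2]
  · intro k _
    exact (Fin.prod_univ_one _).trans (one_div _)

lemma padicValRat_sum_eq_of_lt {p j : ℕ} [Fact p.Prime] {F : ℕ → ℚ} {S : Finset ℕ} (hj : j ∈ S)
    (hF : ∀ i ∈ S, i ≠ j → padicValRat p (F j) < padicValRat p (F i)) (hpos : ∀ i, 0 < F i) :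
    padicValRat p (∑ i ∈ S, F i) = padicValRat p (F j) := by
  rw [← add_sum_erase S F hj]
  rcases (S.erase j).eq_empty_or_nonempty with hempty | hne
  · simp [hempty]
  · have hrest := sum_pos (fun i _ => hpos i) hne
    refine padicValRat.add_eq_of_lt (add_pos (hpos j) hrest).ne' (hpos j).ne' hrest.ne' ?_
    exact padicValRat.lt_sum_of_lt hne
      (fun i hi => hF i (mem_of_mem_erase hi) (ne_of_mem_erase hi)) hpos

lemma padicValNat_two_lt_of_lt_two_pow {k t : ℕ} (hk0 : k ≠ 0) (hk : k < 2 ^ (t + 1))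
    (hkt : k ≠ 2 ^ t) : padicValNat 2 k < t := by
  by_contra! hle
  obtain ⟨c, rfl⟩ : 2 ^ t ∣ k := (pow_dvd_pow 2 hle).trans pow_padicValNat_dvd
  have hc : c = 1 := by
    rw [pow_succ] at hk
    have : c ≠ 0 := by rintro rfl; simp at hk0
    have : c < 2 := lt_of_mul_lt_mul_left hk (by positivity)
    omega
  simp [hc] at hkt

lemma mhs_singleton_pos (s : ℕ) {n : ℕ} (hn : 0 < n) : 0 < mhs [s] n := by
  rw [mhs_singleton]
  exact sum_pos (fun k hk => by have := (mem_Icc.mp hk).1; positivity)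
    ⟨1, mem_Icc.mpr ⟨le_rfl, hn⟩⟩

theorem padicValRat_two_mhs_singleton {s u n : ℕ} (hs : 0 < s) (hun : 2 ^ u ≤ n)
    (hnu : n < 2 ^ (u + 1)) : padicValRat 2 (mhs [s] n) = -(u * s) := by
  have hval (k : ℕ) : padicValRat 2 (((1 + k : ℕ) : ℚ) ^ s)⁻¹ = -(s * padicValNat 2 (1 + k)) := by
    rw [padicValRat.inv, padicValRat.pow, padicValRat.of_nat]
  have hpow : 1 ≤ 2 ^ u := Nat.one_le_two_pow
  -- reindex over `range n`: `padicValRat.lt_sum_of_lt` needs every value of the summand positive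
  rw [mhs_singleton, ← Ico_add_one_right_eq_Icc, sum_Ico_eq_sum_range, Nat.add_sub_cancel]
  have hj : 2 ^ u - 1 ∈ range n := mem_range.mpr (by omega)
  rw [padicValRat_sum_eq_of_lt hj (fun k hk hkj => ?_) (fun k => by positivity), hval,
    Nat.add_sub_cancel' hpow, padicValNat.prime_pow]
  · ring
  have hk : padicValNat 2 (1 + k) < u :=
    padicValNat_two_lt_of_lt_two_pow (by omega) (by have := mem_range.mp hk; omega) (by omega)
  rw [hval, hval, Nat.add_sub_cancel' hpow, padicValNat.prime_pow, neg_lt_neg_iff]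
  gcongr

lemma not_dvd_num_of_padicValRat_nonpos {p : ℕ} [hp : Fact p.Prime] {q : ℚ} (hq : q ≠ 0)
    (hv : padicValRat p q ≤ 0) : ¬ (p : ℤ) ∣ q.num := by
  intro hdvd
  have hden : ¬ p ∣ q.den := fun hden => hp.out.one_lt.ne'
    (Nat.eq_one_of_dvd_coprimes q.reduced (Int.natAbs_dvd_natAbs.mpr hdvd) hden)
  have hnum : 1 ≤ padicValInt p q.num :=
    ((padicValInt_dvd_iff 1 q.num).mp (by simpa using hdvd)).resolve_left (Rat.num_ne_zero.mpr hq)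
  rw [padicValRat_def, padicValNat.eq_zero_of_not_dvd hden] at hv
  omega

/-- For `2^{t-1} ≤ n < 2^t` one has `v_2(H(s;n)) = -(t-1)s`; in particular the
numerator of `H(s;n)` is odd for all `n ≥ 1`, i.e. `J(s|2) = {0}`. -/
theorem stmt10 (s : ℕ) (hs : 0 < s) :
    (∀ n t : ℕ, 0 < n → 1 ≤ t → 2 ^ (t - 1) ≤ n → n < 2 ^ t →
      mhs [s] n ≠ 0 ∧ padicValRat 2 (mhs [s] n) = -(((t : ℤ) - 1) * s)) ∧
    {n : ℕ | (2 : ℤ) ∣ (mhs [s] n).num} = {0} := by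
  refine ⟨fun n t hn ht htn hnt => ⟨(mhs_singleton_pos s hn).ne', ?_⟩, ?_⟩
  · obtain ⟨u, rfl⟩ := Nat.exists_eq_add_of_le' ht
    rw [padicValRat_two_mhs_singleton hs htn hnt]
    push_cast
    ring
  ext n
  rcases Nat.eq_zero_or_pos n with rfl | hn
  · simp [mhs_singleton]
  have hval := padicValRat_two_mhs_singleton hs (Nat.pow_log_le_self 2 hn.ne')
    (Nat.lt_pow_succ_log_self one_lt_two n)
  simp only [Set.mem_ofPred_eq, Set.mem_singleton_iff, hn.ne', iff_false]
  exact not_dvd_num_of_padicValRat_nonpos (mhs_singleton_pos s hn).ne'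
    (hval ▸ neg_nonpos.mpr (by positivity))
end

section
/- Let n be a positive integer and let H₁*(n) = Σ_{1 ≤ k ≤ n, k odd} 1/k. Then v_2(H₁*(n)) ≥ 2 if n ≡ 0 or 3 (mod 4), and v_2(H₁*(n) − 1) ≥ 2 if n ≡ 1 or 2 (mod 4). That is, H₁*(n) ≡ 0 (mod 4) in the first case and H₁*(n) ≡ 1 (mod 4) in the second, as 2-adically integral rationals. -/
noncomputable def S (n : ℕ) : ℚ :=
  ∑ k ∈ Finset.range (n+1), if k % 2 = 1 then (1:ℚ)/k else 0

open Classical in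
lemma mhsStar_eq (n : ℕ) : mhsStar 2 [1] n = S n := by
  unfold mhsStar S
  rw [Finset.sum_filter]
  simp only [List.length_singleton, List.get_eq_getElem, List.getElem_cons_zero, pow_one]
  rw [← (Equiv.funUnique (Fin 1) (Fin (n+1))).symm.sum_comp]
  rw [← Fin.sum_univ_eq_sum_range]
  apply Finset.sum_congr rfl
  intro k _
  simp only [Equiv.funUnique_symm_apply, uniqueElim_const, Fin.prod_univ_one]
  have hsm : StrictMono (fun _ : Fin 1 => k) := Subsingleton.strictMono _
  by_cases h : (k : ℕ) % 2 = 1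
  · rw [if_pos, if_pos h]
    · simp
    · exact ⟨hsm, fun i => ⟨Nat.one_le_iff_ne_zero.2 (by omega), by omega⟩⟩
  · rw [if_neg, if_neg h]
    rintro ⟨-, h2⟩
    have := (h2 0).2
    omega

lemma val_ge_two (a b : ℕ) (ha : a ≠ 0) (h4 : 4 ∣ a) (hb : b % 2 = 1) :
    2 ≤ padicValRat 2 ((a : ℚ) / (b : ℚ)) := by
  have hb0 : b ≠ 0 := by omega
  have haq : (a : ℚ) ≠ 0 := Nat.cast_ne_zero.2 ha
  have hbq : (b : ℚ) ≠ 0 := Nat.cast_ne_zero.2 hb0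
  rw [padicValRat.div haq hbq, padicValRat.of_nat, padicValRat.of_nat]
  have h1 : 2 ≤ padicValNat 2 a := by
    rw [← padicValNat_dvd_iff_le ha]
    simpa using h4
  have h2 : padicValNat 2 b = 0 :=
    padicValNat.eq_zero_of_not_dvd (by omega)
  rw [h2]
  simp only [Nat.cast_zero, sub_zero]
  exact_mod_cast h1

lemma inc_val (a : ℕ) (ha : a % 2 = 1) :
    (1/(a:ℚ) + 1/((a:ℚ)+2) ≠ 0) ∧ 2 ≤ padicValRat 2 (1/(a:ℚ) + 1/((a:ℚ)+2)) := by
  have ha0 : (0:ℚ) < a := by exact_mod_cast Nat.pos_of_ne_zero (by omega)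
  have hpos : 0 < 1/(a:ℚ) + 1/((a:ℚ)+2) := by positivity
  refine ⟨ne_of_gt hpos, ?_⟩
  have heq : 1/(a:ℚ) + 1/((a:ℚ)+2) = ((2*a+2 : ℕ) : ℚ) / ((a*(a+2) : ℕ) : ℚ) := by
    push_cast
    field_simp
    ring
  rw [heq]
  apply val_ge_two
  · omega
  · omega
  · rw [← Nat.odd_iff]
    exact Nat.odd_mul.2 ⟨Nat.odd_iff.2 ha, Nat.odd_iff.2 (by omega)⟩

lemma val_add (x E : ℚ) (hx : x = 0 ∨ 2 ≤ padicValRat 2 x) (hE : E ≠ 0)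
    (hvE : 2 ≤ padicValRat 2 E) : x + E = 0 ∨ 2 ≤ padicValRat 2 (x + E) := by
  rcases hx with rfl | hx
  · right; simpa using hvE
  by_cases h : x + E = 0
  · exact Or.inl h
  · right
    calc (2:ℤ) ≤ min (padicValRat 2 x) (padicValRat 2 E) := le_min hx hvE
    _ ≤ _ := padicValRat.min_le_padicValRat_add h

def good (n : ℕ) : Prop :=
    ((n % 4 = 0 ∨ n % 4 = 3) → (S n = 0 ∨ 2 ≤ padicValRat 2 (S n))) ∧
    ((n % 4 = 1 ∨ n % 4 = 2) → (S n - 1 = 0 ∨ 2 ≤ padicValRat 2 (S n - 1)))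

lemma S_step (n : ℕ) :
    ∃ a : ℕ, a % 2 = 1 ∧ S (n+4) = S n + (1/(a:ℚ) + 1/((a:ℚ)+2)) := by
  have expand : S (n+4) = S n
      + (if (n+1) % 2 = 1 then (1:ℚ)/(n+1) else 0)
      + (if (n+2) % 2 = 1 then (1:ℚ)/(n+2) else 0)
      + (if (n+3) % 2 = 1 then (1:ℚ)/(n+3) else 0)
      + (if (n+4) % 2 = 1 then (1:ℚ)/(n+4) else 0) := by
    unfold S
    rw [show n+4+1 = (n+4)+1 from rfl, Finset.sum_range_succ, Finset.sum_range_succ,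
        Finset.sum_range_succ, Finset.sum_range_succ]
    push_cast
    ring
  rcases Nat.mod_two_eq_zero_or_one n with he | ho
  · refine ⟨n+1, by omega, ?_⟩
    have h1 : (n+1) % 2 = 1 := by omega
    have h2 : (n+2) % 2 ≠ 1 := by omega
    have h3 : (n+3) % 2 = 1 := by omega
    have h4 : (n+4) % 2 ≠ 1 := by omega
    rw [expand, if_pos h1, if_neg h2, if_pos h3, if_neg h4]
    push_cast
    ring
  · refine ⟨n+2, by omega, ?_⟩
    have h1 : (n+1) % 2 ≠ 1 := by omega
    have h2 : (n+2) % 2 = 1 := by omega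
    have h3 : (n+3) % 2 ≠ 1 := by omega
    have h4 : (n+4) % 2 = 1 := by omega
    rw [expand, if_neg h1, if_pos h2, if_neg h3, if_pos h4]
    push_cast
    ring

lemma good_step (n : ℕ) (h : good n) : good (n+4) := by
  obtain ⟨a, ha, hS⟩ := S_step n
  obtain ⟨hE0, hEv⟩ := inc_val a ha
  have hm : (n+4) % 4 = n % 4 := by omega
  constructor
  · intro hc
    rw [hS]
    exact val_add _ _ (h.1 (by omega)) hE0 hEv
  · intro hc
    rw [hS, show S n + (1/(a:ℚ) + 1/((a:ℚ)+2)) - 1 = (S n - 1) + (1/(a:ℚ) + 1/((a:ℚ)+2)) by ring]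
    exact val_add _ _ (h.2 (by omega)) hE0 hEv

lemma S_three : S 3 = 4/3 := by
  unfold S
  simp [Finset.sum_range_succ]
  norm_num

lemma good_all : ∀ n, good n
  | 0 => ⟨fun _ => Or.inl (by simp [S]), fun h => by omega⟩
  | 1 => ⟨fun h => by omega, fun _ => Or.inl (by simp [S, Finset.sum_range_succ])⟩
  | 2 => ⟨fun h => by omega, fun _ => Or.inl (by
      have : S 2 = 1 := by
        unfold S
        simp [Finset.sum_range_succ]
      rw [this]; ring)⟩
  | 3 => ⟨fun _ => Or.inr (by
      rw [S_three]
      have := val_ge_two 4 3 (by norm_num) (by norm_num) (by norm_num)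
      simpa using this), fun h => by omega⟩
  | (n+4) => good_step n (good_all n)


/-- `H₁*(n) = ∑_{1 ≤ k ≤ n, k odd} 1/k` satisfies `H₁*(n) ≡ 0 (mod 4)` if
`n ≡ 0, 3 (mod 4)` and `H₁*(n) ≡ 1 (mod 4)` if `n ≡ 1, 2 (mod 4)`, where congruence
means 2-adic valuation of the difference is `≥ 2` (with `v_2(0) = ∞`). -/
theorem stmt13 (n : ℕ) (hn : 0 < n) :
    ((n % 4 = 0 ∨ n % 4 = 3) →
      (mhsStar 2 [1] n = 0 ∨ 2 ≤ padicValRat 2 (mhsStar 2 [1] n))) ∧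
    ((n % 4 = 1 ∨ n % 4 = 2) →
      (mhsStar 2 [1] n - 1 = 0 ∨ 2 ≤ padicValRat 2 (mhsStar 2 [1] n - 1))) := by
  rw [mhsStar_eq]
  exact good_all n
end
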